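/- arXiv:1502.00180 — 6 statements merged into one kernel-verified Lean document; each statement's English description precedes it below -/
import Mathlib

section
/- Let γ : S¹ → ℂⁿ be a C¹-smooth closed curve, and let α be the 1-form Σⱼ (xⱼ dyⱼ − yⱼ dxⱼ) on ℂⁿ = ℝ²ⁿ. Then the square of the length of γ is at least 2π times the integral of γ*α over S¹, i.e. (∫₀¹ |γ'(t)| dt)² ≥ 2π ∫₀¹ α(γ'(t)) dt. -/
open MeasureTheory intervalIntegral Complex Filter Topology
open scoped Real InnerProductSpace

/-!
Hurwitz's Fourier-series argument. On `ℂⁿ` the integrand of `γ*α` is `Im⟪γ, γ'⟫`. For a closed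
curve `f` on `[a, b]` with mean `c`, the constant `c` contributes nothing to `∫ Im⟪f, f'⟫`, and
Wirtinger's inequality `(2π)² ∫ ‖f - c‖² ≤ (b - a)² ∫ ‖f'‖²` (Parseval, with the Fourier
coefficients of `f'` being `2πin / (b - a)` times those of `f`) combined with AM-GM gives
`2π ∫ Im⟪f, f'⟫ ≤ (b - a) ∫ ‖f'‖²`. Reparametrizing by the inverse of a primitive of `‖f'‖ + ε`
leaves the action unchanged, produces a curve of speed at most `1` on an interval of length
`L + ε (b - a)`, and so bounds `2π ∫ Im⟪f, f'⟫` by `(L + ε (b - a))²`; let `ε → 0`.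
-/

theorem sq_two_pi_mul_norm_fourierCoeffOn_sq_le {a b : ℝ} (hab : a < b) {g g' : ℝ → ℂ}
    (hg : ∀ t, HasDerivAt g (g' t) t) (hg' : Continuous g') (hgab : g a = g b)
    (hmean : ∫ t in a..b, g t = 0) (n : ℤ) :
    (2 * π) ^ 2 * ‖fourierCoeffOn hab g n‖ ^ 2 ≤ (b - a) ^ 2 * ‖fourierCoeffOn hab g' n‖ ^ 2 := by
  rcases eq_or_ne n 0 with rfl | hn
  · have h0 : fourierCoeffOn hab g 0 = 0 := by simp [fourierCoeffOn_eq_integral, hmean]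
    rw [h0, norm_zero, zero_pow two_ne_zero, mul_zero]
    positivity
  have key := fourierCoeffOn_of_hasDerivAt hab hn (fun t _ => hg t) (hg'.intervalIntegrable a b)
  rw [hgab, sub_self, mul_zero, zero_sub] at key
  have hnorm :
      2 * π * |(n : ℝ)| * ‖fourierCoeffOn hab g n‖ = (b - a) * ‖fourierCoeffOn hab g' n‖ := by
    simp only [key, neg_mul, one_div, inv_neg, mul_inv_rev, inv_I, mul_neg, neg_neg, norm_neg,
      Complex.norm_mul, norm_inv, norm_intCast, norm_I, norm_real, Real.norm_eq_abs,
      abs_of_pos Real.pi_pos, norm_ofNat, one_mul]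
    rw [← ofReal_sub, norm_real, Real.norm_of_nonneg (sub_pos.2 hab).le]
    field_simp
  have h2pi : 2 * π ≤ 2 * π * |(n : ℝ)| :=
    le_mul_of_one_le_right (by positivity) (by exact_mod_cast Int.one_le_abs hn)
  calc (2 * π) ^ 2 * ‖fourierCoeffOn hab g n‖ ^ 2
      ≤ (2 * π * |(n : ℝ)|) ^ 2 * ‖fourierCoeffOn hab g n‖ ^ 2 := by gcongr
    _ = (b - a) ^ 2 * ‖fourierCoeffOn hab g' n‖ ^ 2 := by rw [← mul_pow, hnorm, mul_pow]

theorem sq_two_pi_mul_integral_norm_sq_le {a b : ℝ} (hab : a < b) {g g' : ℝ → ℂ}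
    (hg : ∀ t, HasDerivAt g (g' t) t) (hg' : Continuous g') (hgab : g a = g b)
    (hmean : ∫ t in a..b, g t = 0) :
    (2 * π) ^ 2 * ∫ t in a..b, ‖g t‖ ^ 2 ≤ (b - a) ^ 2 * ∫ t in a..b, ‖g' t‖ ^ 2 := by
  have hgc : Continuous g := continuous_iff_continuousAt.2 fun t => (hg t).continuousAt
  have memLp {u : ℝ → ℂ} (hu : Continuous u) : MemLp u 2 (volume.restrict (Set.Ioc a b)) :=
    (memLp_two_iff_integrable_sq_norm hu.aestronglyMeasurable).2 (hu.norm.pow 2).integrableOn_Ioc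
  have parseval := hasSum_le (sq_two_pi_mul_norm_fourierCoeffOn_sq_le hab hg hg' hgab hmean)
    ((hasSum_sq_fourierCoeffOn hab (memLp hgc)).mul_left _)
    ((hasSum_sq_fourierCoeffOn hab (memLp hg')).mul_left _)
  simp only [smul_eq_mul, mul_left_comm _ (b - a)⁻¹] at parseval
  exact le_of_mul_le_mul_left parseval (inv_pos.2 (sub_pos.2 hab))

theorem exists_inverse_of_primitive {w : ℝ → ℝ} (hw : Continuous w) {c : ℝ} (hc : 0 < c)
    (hcw : ∀ t, c ≤ w t) (a b : ℝ) :
    ∃ φ : ℝ → ℝ, φ 0 = a ∧ φ (∫ t in a..b, w t) = b ∧ ∀ s, HasDerivAt φ (w (φ s))⁻¹ s := by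
  set S : ℝ → ℝ := fun x => ∫ t in a..x, w t
  have hS (x : ℝ) : HasDerivAt S (w x) x := (hw.integral_hasStrictDerivAt a x).hasDerivAt
  have hSc : Continuous S := continuous_iff_continuousAt.2 fun x => (hS x).continuousAt
  have expanding : ∀ ⦃x y⦄, x ≤ y → c * (y - x) ≤ S y - S x :=
    mul_sub_le_image_sub_of_le_deriv (fun x => (hS x).differentiableAt)
      fun x => (hS x).deriv ▸ hcw x
  have hSa : S a = 0 := integral_same
  have hsurj : Function.Surjective S := by
    refine hSc.surjective (tendsto_atTop_mono' _ ?_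
      ((tendsto_atTop_add_const_right _ (-a) tendsto_id).const_mul_atTop hc))
      (tendsto_atBot_mono' _ ?_
      ((tendsto_atBot_add_const_right _ (-a) tendsto_id).const_mul_atBot hc))
    · filter_upwards [eventually_ge_atTop a] with x hx
      simpa [hSa, sub_eq_add_neg] using expanding hx
    · filter_upwards [eventually_le_atBot a] with x hx
      have := expanding hx
      rw [hSa] at this
      simp only [id]
      linarith
  set e := StrictMono.orderIsoOfSurjective S
    (strictMono_of_hasDerivAt_pos hS fun x => hc.trans_le (hcw x)) hsurj
  have he : ⇑e = S := StrictMono.coe_orderIsoOfSurjective _ _ _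
  refine ⟨e.symm, e.symm_apply_eq.2 (by rw [he, hSa]), e.symm_apply_eq.2 (by rw [he]), fun s => ?_⟩
  refine HasDerivAt.of_local_left_inverse e.symm.continuous.continuousAt (he ▸ hS _)
    (hc.trans_le (hcw _)).ne' (Eventually.of_forall e.apply_symm_apply)

theorem integral_im_inner_comp_smul_deriv {E : Type*} [NormedAddCommGroup E]
    [InnerProductSpace ℂ E] {f f' : ℝ → E} (hf : Continuous f) (hf' : Continuous f')
    {φ φ' : ℝ → ℝ} (hφ : ∀ s, HasDerivAt φ (φ' s) s) (hφ' : Continuous φ') (s₀ s₁ : ℝ) :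
    ∫ s in s₀..s₁, (⟪f (φ s), φ' s • f' (φ s)⟫_ℂ).im = ∫ t in φ s₀..φ s₁, (⟪f t, f' t⟫_ℂ).im := by
  simp_rw [inner_smul_right_eq_smul, Complex.smul_im]
  exact integral_deriv_smul_comp (fun s _ => hφ s) hφ'.continuousOn
    (by fun_prop : Continuous fun t => (⟪f t, f' t⟫_ℂ).im)

namespace EuclideanSpace

variable {ι : Type*} [Fintype ι]

theorem integral_norm_sq_eq_sum {𝕜 : Type*} [RCLike 𝕜] {g : ℝ → EuclideanSpace 𝕜 ι}
    (hg : Continuous g) (a b : ℝ) :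
    ∫ t in a..b, ‖g t‖ ^ 2 = ∑ j, ∫ t in a..b, ‖g t j‖ ^ 2 := by
  simp_rw [norm_sq_eq]
  exact integral_finsetSum fun j _ => Continuous.intervalIntegrable (by fun_prop) a b

theorem sq_two_pi_mul_integral_norm_sq_le {a b : ℝ} (hab : a < b)
    {g g' : ℝ → EuclideanSpace ℂ ι} (hg : ∀ t, HasDerivAt g (g' t) t) (hg' : Continuous g')
    (hgab : g a = g b) (hmean : ∫ t in a..b, g t = 0) :
    (2 * π) ^ 2 * ∫ t in a..b, ‖g t‖ ^ 2 ≤ (b - a) ^ 2 * ∫ t in a..b, ‖g' t‖ ^ 2 := by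
  have hgc : Continuous g := continuous_iff_continuousAt.2 fun t => (hg t).continuousAt
  rw [integral_norm_sq_eq_sum hgc, integral_norm_sq_eq_sum hg', Finset.mul_sum, Finset.mul_sum]
  refine Finset.sum_le_sum fun j _ => _root_.sq_two_pi_mul_integral_norm_sq_le hab
    (fun t => (PiLp.hasFDerivAt_apply (𝕜 := ℝ) 2 (g t) j).comp_hasDerivAt t (hg t))
    (by fun_prop) (by rw [hgab]) ?_
  simpa [hmean] using
    (proj j).intervalIntegral_comp_comm (hgc.intervalIntegrable (μ := volume) a b)

theorem two_pi_mul_integral_im_inner_le {a b : ℝ} (hab : a < b)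
    {f f' : ℝ → EuclideanSpace ℂ ι} (hf : ∀ t, HasDerivAt f (f' t) t) (hf' : Continuous f')
    (hfab : f a = f b) :
    2 * π * ∫ t in a..b, (⟪f t, f' t⟫_ℂ).im ≤ (b - a) * ∫ t in a..b, ‖f' t‖ ^ 2 := by
  have hfc : Continuous f := continuous_iff_continuousAt.2 fun t => (hf t).continuousAt
  set c := (b - a)⁻¹ • ∫ t in a..b, f t
  have hmean : ∫ t in a..b, (f t - c) = 0 := by
    rw [integral_sub (hfc.intervalIntegrable a b) intervalIntegrable_const,
      intervalIntegral.integral_const, smul_smul, mul_inv_cancel₀ (sub_ne_zero.2 hab.ne'),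
      one_smul, sub_self]
  have wirtinger := EuclideanSpace.sq_two_pi_mul_integral_norm_sq_le hab
    (fun t => (hf t).sub_const c) hf' (by rw [hfab]) hmean
  have hconst : ∫ t in a..b, (⟪c, f' t⟫_ℂ).im = 0 := by
    have h1 := imCLM.intervalIntegral_comp_comm (Continuous.intervalIntegrable (μ := volume)
      (by fun_prop : Continuous fun t => ⟪c, f' t⟫_ℂ) a b)
    have h2 := (innerSL ℂ c).intervalIntegral_comp_comm (hf'.intervalIntegrable (μ := volume) a b)
    rw [integral_eq_sub_of_hasDerivAt (fun t _ => hf t) (hf'.intervalIntegrable a b), hfab,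
      sub_self] at h2
    simp only [imCLM_apply, innerSL_apply_apply] at h1 h2
    rw [h1, h2, inner_zero_right, zero_im]
  have amgm : ∀ t, 2 * (b - a) * (2 * π) * (⟪f t - c, f' t⟫_ℂ).im
      ≤ (2 * π) ^ 2 * ‖f t - c‖ ^ 2 + (b - a) ^ 2 * ‖f' t‖ ^ 2 := by
    intro t
    have h := (im_le_norm _).trans (norm_inner_le_norm (𝕜 := ℂ) (f t - c) (f' t))
    have hk : 0 ≤ 2 * (b - a) * (2 * π) := mul_nonneg (by linarith) (by positivity)
    nlinarith [mul_le_mul_of_nonneg_left h hk, sq_nonneg (2 * π * ‖f t - c‖ - (b - a) * ‖f' t‖)]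
  have hint {u : ℝ → ℝ} (hu : Continuous u) : IntervalIntegrable u volume a b :=
    hu.intervalIntegrable a b
  refine le_of_mul_le_mul_left ?_ (by linarith : 0 < 2 * (b - a))
  calc 2 * (b - a) * (2 * π * ∫ t in a..b, (⟪f t, f' t⟫_ℂ).im)
      = ∫ t in a..b, 2 * (b - a) * (2 * π) * (⟪f t - c, f' t⟫_ℂ).im := by
        simp only [inner_sub_left, sub_im, mul_sub]
        rw [integral_sub (hint (by fun_prop)) (hint (by fun_prop)),
          intervalIntegral.integral_const_mul, intervalIntegral.integral_const_mul, hconst,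
          mul_zero, sub_zero]
        ring
    _ ≤ ∫ t in a..b, ((2 * π) ^ 2 * ‖f t - c‖ ^ 2 + (b - a) ^ 2 * ‖f' t‖ ^ 2) :=
        integral_mono_on hab.le (hint (by fun_prop)) (hint (by fun_prop)) fun t _ => amgm t
    _ = (2 * π) ^ 2 * (∫ t in a..b, ‖f t - c‖ ^ 2) + (b - a) ^ 2 * ∫ t in a..b, ‖f' t‖ ^ 2 := by
        rw [integral_add (hint (by fun_prop)) (hint (by fun_prop)),
          intervalIntegral.integral_const_mul, intervalIntegral.integral_const_mul]
    _ ≤ 2 * (b - a) * ((b - a) * ∫ t in a..b, ‖f' t‖ ^ 2) := by linarith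

theorem two_pi_mul_integral_im_inner_le_sq_integral_of_norm_le {a b : ℝ}
    (hab : a < b) {f f' : ℝ → EuclideanSpace ℂ ι} (hf : ∀ t, HasDerivAt f (f' t) t)
    (hf' : Continuous f') (hfab : f a = f b) {w : ℝ → ℝ} (hw : Continuous w) {c : ℝ}
    (hc : 0 < c) (hcw : ∀ t, c ≤ w t) (hfw : ∀ t, ‖f' t‖ ≤ w t) :
    2 * π * ∫ t in a..b, (⟪f t, f' t⟫_ℂ).im ≤ (∫ t in a..b, w t) ^ 2 := by
  obtain ⟨φ, hφa, hφb, hφ⟩ := exists_inverse_of_primitive hw hc hcw a b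
  set A := ∫ t in a..b, w t
  have hA : 0 < A :=
    intervalIntegral_pos_of_pos (hw.intervalIntegrable a b) (fun t => hc.trans_le (hcw t)) hab
  have hfc : Continuous f := continuous_iff_continuousAt.2 fun t => (hf t).continuousAt
  have hφc : Continuous φ := continuous_iff_continuousAt.2 fun s => (hφ s).continuousAt
  have hwφ : Continuous fun s => (w (φ s))⁻¹ :=
    (hw.comp hφc).inv₀ fun s => (hc.trans_le (hcw _)).ne'
  have unit_speed (s : ℝ) : ‖(w (φ s))⁻¹ • f' (φ s)‖ ≤ 1 := by
    rw [norm_smul, norm_inv, Real.norm_of_nonneg (hc.le.trans (hcw _)),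
      inv_mul_le_one₀ (hc.trans_le (hcw _))]
    exact hfw _
  have energy := two_pi_mul_integral_im_inner_le hA (f := f ∘ φ)
    (fun s => (hf (φ s)).scomp s (hφ s)) (hwφ.smul (hf'.comp hφc))
    (by simp only [Function.comp_apply, hφa, hφb, hfab])
  simp only [Function.comp_apply] at energy
  rw [integral_im_inner_comp_smul_deriv hfc hf' hφ hwφ, hφa, hφb, sub_zero] at energy
  calc 2 * π * ∫ t in a..b, (⟪f t, f' t⟫_ℂ).im
      ≤ A * ∫ s in (0 : ℝ)..A, ‖(w (φ s))⁻¹ • f' (φ s)‖ ^ 2 := energy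
    _ ≤ A * ∫ s in (0 : ℝ)..A, (1 : ℝ) := by
        gcongr
        refine integral_mono_on hA.le (Continuous.intervalIntegrable (by fun_prop) _ _)
          intervalIntegrable_const fun s _ => ?_
        exact pow_le_one₀ (norm_nonneg _) (unit_speed s)
    _ = A ^ 2 := by simp [sq]

theorem two_pi_mul_integral_im_inner_le_sq_integral_norm {a b : ℝ} (hab : a < b)
    {f f' : ℝ → EuclideanSpace ℂ ι} (hf : ∀ t, HasDerivAt f (f' t) t) (hf' : Continuous f')
    (hfab : f a = f b) :
    2 * π * ∫ t in a..b, (⟪f t, f' t⟫_ℂ).im ≤ (∫ t in a..b, ‖f' t‖) ^ 2 := by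
  set L := ∫ t in a..b, ‖f' t‖
  have bound (ε : ℝ) (hε : 0 < ε) :
      2 * π * ∫ t in a..b, (⟪f t, f' t⟫_ℂ).im ≤ (L + (b - a) * ε) ^ 2 := by
    have h := two_pi_mul_integral_im_inner_le_sq_integral_of_norm_le hab hf hf' hfab
      (w := fun t => ‖f' t‖ + ε) (by fun_prop) hε
      (fun t => le_add_of_nonneg_left (norm_nonneg _)) (fun t => le_add_of_nonneg_right hε.le)
    rwa [integral_add (hf'.norm.intervalIntegrable a b) intervalIntegrable_const,
      intervalIntegral.integral_const, smul_eq_mul] at h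
  have hlim : Tendsto (fun ε => (L + (b - a) * ε) ^ 2) (𝓝[>] 0) (𝓝 (L ^ 2)) := by
    have h : Continuous fun ε => (L + (b - a) * ε) ^ 2 := by fun_prop
    simpa using (h.tendsto 0).mono_left nhdsWithin_le_nhds
  exact ge_of_tendsto hlim (eventually_nhdsWithin_of_forall bound)

theorem im_inner_eq_sum (x y : EuclideanSpace ℂ ι) :
    (⟪x, y⟫_ℂ).im = ∑ j, ((x j).re * (y j).im - (x j).im * (y j).re) := by
  rw [PiLp.inner_apply, im_sum]
  refine Finset.sum_congr rfl fun j _ => ?_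
  simp only [RCLike.inner_apply, conj_re, conj_im, mul_im]
  ring

end EuclideanSpace

/-- **Generalized isoperimetric inequality** (Lemma A.2 of Chekanov–Schlenk).
For a `C¹` closed curve `γ : S¹ → ℂⁿ`, the square of its length is at least
`2π` times the integral of the pullback of `α = Σⱼ (xⱼ dyⱼ − yⱼ dxⱼ)`. -/
theorem square_length_ge_two_pi_mul_integral_alpha
    (n : ℕ) (γ : ℝ → EuclideanSpace ℂ (Fin n))
    (hγ : ContDiff ℝ 1 γ) (hper : ∀ t, γ (t + 1) = γ t) :
    2 * Real.pi *
        (∫ t in (0:ℝ)..1,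
          ∑ j, ((γ t j).re * (deriv γ t j).im - (γ t j).im * (deriv γ t j).re))
      ≤ (∫ t in (0:ℝ)..1, ‖deriv γ t‖) ^ 2 := by
  have h := EuclideanSpace.two_pi_mul_integral_im_inner_le_sq_integral_norm zero_lt_one
    (fun t => ((hγ.differentiable one_ne_zero) t).hasDerivAt) (hγ.continuous_deriv le_rfl)
    (by simpa using (hper 0).symm)
  simpa only [EuclideanSpace.im_inner_eq_sum] using h
end

section
/- Let u, u' ∈ ℝˡ be vectors whose components generate the same additive subgroup of ℝ (i.e., the subgroup of ℝ generated by u₁,…,u_l equals the subgroup generated by u'₁,…,u'_l). Then there exists a matrix A ∈ GL(l,ℤ) such that A u = u'. -/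
/-!
Both `u` and `u'` define surjections `ℤˡ → M` onto the common subgroup `M ⊆ ℝ`, which is finitely
generated and torsion-free, hence free. Both surjections split, so `ℤˡ ≅ ker ⊕ M` in two ways; the
two kernels are free of the same rank `l - rank M`, and an isomorphism between them, glued with the
identity of `M`, is an automorphism `α` of `ℤˡ` intertwining the two surjections. The transposed
matrix of `α` is the required `A`.
-/

open Module LinearMap Matrix

section Splitting

variable {R N N' M : Type*} [Ring R] [AddCommGroup N] [Module R N] [AddCommGroup N']
  [Module R N'] [AddCommGroup M] [Module R M] [Module.Projective R M]

theorem LinearMap.exists_linearEquiv_prod_ker_of_surjective (φ : N →ₗ[R] M)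
    (hφ : Function.Surjective φ) :
    ∃ e : N ≃ₗ[R] ker φ × M, φ = snd R (ker φ) M ∘ₗ e := by
  obtain ⟨s, hs⟩ := φ.exists_rightInverse_of_surjective (range_eq_top.2 hφ)
  exact ⟨_, ((exact_subtype_ker_map φ).splitSurjectiveEquiv (ker φ).injective_subtype
    ⟨s, hs⟩).2.2⟩

theorem LinearMap.exists_linearEquiv_comp_eq_of_surjective (φ : N →ₗ[R] M) (ψ : N' →ₗ[R] M)
    (hφ : Function.Surjective φ) (hψ : Function.Surjective ψ) (k : ker ψ ≃ₗ[R] ker φ) :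
    ∃ α : N' ≃ₗ[R] N, φ ∘ₗ α = ψ := by
  obtain ⟨eφ, hφe⟩ := φ.exists_linearEquiv_prod_ker_of_surjective hφ
  obtain ⟨eψ, hψe⟩ := ψ.exists_linearEquiv_prod_ker_of_surjective hψ
  refine ⟨eψ.trans ((k.prodCongr (.refl R M)).trans eφ.symm), LinearMap.ext fun x => ?_⟩
  rw [LinearMap.comp_apply, LinearMap.congr_fun hφe, LinearMap.congr_fun hψe]
  simp

end Splitting

universe u

theorem LinearMap.finrank_ker_eq_of_surjective {R M : Type*} {N : Type u} [Ring R]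
    [StrongRankCondition R] [HasRankNullity.{u} R]
    [AddCommGroup N] [Module R N] [Module.Finite R N] [AddCommGroup M] [Module R M]
    {φ ψ : N →ₗ[R] M} (hφ : Function.Surjective φ) (hψ : Function.Surjective ψ) :
    finrank R (ker φ) = finrank R (ker ψ) := by
  have hφ' := (ker φ).finrank_quotient_add_finrank
  have hψ' := (ker ψ).finrank_quotient_add_finrank
  rw [(φ.quotKerEquivOfSurjective hφ).finrank_eq] at hφ'
  rw [(ψ.quotKerEquivOfSurjective hψ).finrank_eq] at hψ'
  omega

theorem LinearMap.exists_linearEquiv_comp_eq_of_range_eq {R N M : Type*} [CommRing R] [IsDomain R]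
    [IsPrincipalIdealRing R] [AddCommGroup N] [Module R N] [Module.Free R N] [Module.Finite R N]
    [AddCommGroup M] [Module R M] [Module.IsTorsionFree R M]
    (T T' : N →ₗ[R] M) (h : range T = range T') :
    ∃ α : N ≃ₗ[R] N, T ∘ₗ α = T' := by
  let φ := T.rangeRestrict
  let ψ := T'.codRestrict (range T) (fun x => h ▸ mem_range_self T' x)
  have hψ : Function.Surjective ψ := by
    rintro ⟨y, hy⟩
    obtain ⟨x, rfl⟩ := h ▸ hy
    exact ⟨x, rfl⟩
  obtain ⟨α, hα⟩ := φ.exists_linearEquiv_comp_eq_of_surjective ψ T.surjective_rangeRestrict hψ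
    (LinearEquiv.ofFinrankEq _ _ (finrank_ker_eq_of_surjective hψ T.surjective_rangeRestrict))
  exact ⟨α, congr_arg ((range T).subtype ∘ₗ ·) hα⟩

theorem isUnit_det_and_mulVec_eq_of_linearCombination_comp_eq {ι S : Type*} [Fintype ι]
    [DecidableEq ι] [Ring S]
    {u u' : ι → S} {α : (ι → ℤ) ≃ₗ[ℤ] (ι → ℤ)}
    (h : Fintype.linearCombination ℤ u ∘ₗ α = Fintype.linearCombination ℤ u') :
    IsUnit (toMatrix' (α : (ι → ℤ) →ₗ[ℤ] ι → ℤ))ᵀ.det ∧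
      ((toMatrix' (α : (ι → ℤ) →ₗ[ℤ] ι → ℤ))ᵀ.map (Int.cast : ℤ → S)).mulVec u = u' := by
  refine ⟨by simpa [det_toMatrix'] using α.isUnit_det', funext fun i => ?_⟩
  have hi := LinearMap.congr_fun h (Pi.single i 1)
  rw [LinearMap.comp_apply, Fintype.linearCombination_apply_single, one_smul] at hi
  simp [← hi, mulVec, dotProduct, Fintype.linearCombination_apply, zsmul_eq_mul]

/-- **Lemma B.2 of Chekanov–Schlenk.** If the components of `u, u' ∈ ℝˡ` generate
the same additive subgroup of `ℝ`, then some `A ∈ GL(l,ℤ)` maps `u` to `u'`. -/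
theorem exists_glZ_mulVec_eq_of_closure_range_eq
    (l : ℕ) (u u' : Fin l → ℝ)
    (h : AddSubgroup.closure (Set.range u) = AddSubgroup.closure (Set.range u')) :
    ∃ A : Matrix (Fin l) (Fin l) ℤ,
      IsUnit A.det ∧ (A.map (Int.cast : ℤ → ℝ)).mulVec u = u' := by
  have hrange : range (Fintype.linearCombination ℤ u) = range (Fintype.linearCombination ℤ u') := by
    simpa [Fintype.range_linearCombination, ← Submodule.toAddSubgroup_inj,
      Submodule.span_int_eq_addSubgroupClosure] using h
  obtain ⟨α, hα⟩ := exists_linearEquiv_comp_eq_of_range_eq _ _ hrange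
  exact ⟨_, isUnit_det_and_mulVec_eq_of_linearCombination_comp_eq hα⟩
end

section
/- Given d, e ∈ ℝ₊² with ⟨d⟩ = ⟨e⟩ (the components generate the same additive subgroup of ℝ), and given A ∈ GL(2,ℤ) with A d = e, there exists an admissible path from d to e: a finite sequence d = d⁰, d¹, …, dˡ = e of vectors in ℝ₊² such that each dˢ⁺¹ is obtained from dˢ by one of the operators P₁₂, P₂₁, M₁₂, M₂₁, I₁₂. -/
/-- One admissible step: for some pair of different indices `i ≠ j`, the vector `w`
is obtained from `v` by the operator `P_{ij}` (add the `j`-th component to the `i`-th),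
`M_{ij}` (subtract the `j`-th component from the `i`-th), or `I_{ij}` (swap the `i`-th
and `j`-th components). -/
def AdmStep {k : ℕ} (v w : Fin k → ℝ) : Prop :=
  ∃ i j : Fin k, i ≠ j ∧
    (w = Function.update v i (v i + v j) ∨
     w = Function.update v i (v i - v j) ∨
     w = v ∘ Equiv.swap i j)

/-- An admissible path from `d` to `e`: a finite sequence of vectors with all components
positive, starting at `d`, ending at `e`, each obtained from the previous by an
admissible step. -/
def AdmPath {k : ℕ} (d e : Fin k → ℝ) : Prop :=
  ∃ (l : ℕ) (f : ℕ → Fin k → ℝ),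
    f 0 = d ∧ f l = e ∧
    (∀ s < l, AdmStep (f s) (f (s + 1))) ∧
    (∀ s ≤ l, ∀ i, 0 < f s i)

/-! Write `e = A d` with `A = !![p, q; r, s]`. A step at the end of a path multiplies `A` on the
left by an elementary matrix; a step at the start replaces `d` by a positive vector `d'` and `A`
by `A E` with `E` elementary. Positivity of the new vector is automatic for additions, and for
the subtraction dictated by the order of the two components. Induct on `A`, lexicographically on
the sum of its negative parts and then on the sum of the absolute values of its entries: row
additions remove negative entries, column subtractions shrink a matrix with a nonpositive column,
and a nonnegative unimodular matrix is the identity, the swap, or has a row dominating the other.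
When `d₁ = d₂ = t` the endpoint is `(u t, w t)` with `u, w` coprime, reached by the Euclidean
algorithm. -/

namespace AdmPath

variable {k : ℕ} {u v w : Fin k → ℝ}

theorem refl (hv : ∀ i, 0 < v i) : AdmPath v v :=
  ⟨0, fun _ => v, rfl, rfl, fun _ hs => absurd hs (Nat.not_lt_zero _), fun _ _ => hv⟩

theorem single (hv : ∀ i, 0 < v i) (hw : ∀ i, 0 < w i) (h : AdmStep v w) : AdmPath v w := by
  refine ⟨1, fun s => if s = 0 then v else w, rfl, rfl, fun s hs => ?_, fun s _ => ?_⟩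
  · obtain rfl : s = 0 := by omega
    simpa using h
  · dsimp only
    split_ifs
    exacts [hv, hw]

theorem trans (h₁ : AdmPath u v) (h₂ : AdmPath v w) : AdmPath u w := by
  obtain ⟨l₁, f₁, h₁0, h₁l, h₁step, h₁pos⟩ := h₁
  obtain ⟨l₂, f₂, h₂0, h₂l, h₂step, h₂pos⟩ := h₂
  set g : ℕ → Fin k → ℝ := fun s => if s ≤ l₁ then f₁ s else f₂ (s - l₁)
  have hg₁ : ∀ s ≤ l₁, g s = f₁ s := fun s hs => if_pos hs
  have hg₂ : ∀ s, l₁ ≤ s → g s = f₂ (s - l₁) := by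
    intro s hs
    rcases hs.eq_or_lt with rfl | hs
    · simp [g, h₁l, h₂0]
    · exact if_neg (by omega)
  refine ⟨l₁ + l₂, g, by simp [g, h₁0], by simp [hg₂, h₂l], fun s hs => ?_, fun s hs => ?_⟩
  · rcases lt_or_ge s l₁ with hs₁ | hs₁
    · rw [hg₁ s hs₁.le, hg₁ (s + 1) hs₁]
      exact h₁step s hs₁
    · rw [hg₂ s hs₁, hg₂ (s + 1) (by omega), show s + 1 - l₁ = s - l₁ + 1 by omega]
      exact h₂step _ (by omega)
  · rcases le_or_gt s l₁ with hs₁ | hs₁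
    · rw [hg₁ s hs₁]
      exact h₁pos s hs₁
    · rw [hg₂ s hs₁.le]
      exact h₂pos _ (by omega)

end AdmPath

theorem vec2_pos {x y : ℝ} (hx : 0 < x) (hy : 0 < y) : ∀ i, 0 < ![x, y] i :=
  Fin.forall_fin_two.2 ⟨hx, hy⟩

section Steps

variable (x y : ℝ)

theorem admStep_add₁ : AdmStep ![x, y] ![x + y, y] :=
  ⟨0, 1, by decide, Or.inl <| by ext i; fin_cases i <;> simp⟩

theorem admStep_add₂ : AdmStep ![x, y] ![x, y + x] :=
  ⟨1, 0, by decide, Or.inl <| by ext i; fin_cases i <;> simp⟩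

theorem admStep_sub₁ : AdmStep ![x + y, y] ![x, y] :=
  ⟨0, 1, by decide, Or.inr <| Or.inl <| by ext i; fin_cases i <;> simp⟩

theorem admStep_sub₂ : AdmStep ![x, y + x] ![x, y] :=
  ⟨1, 0, by decide, Or.inr <| Or.inl <| by ext i; fin_cases i <;> simp⟩

theorem admStep_swap : AdmStep ![x, y] ![y, x] :=
  ⟨0, 1, by decide, Or.inr <| Or.inr <| by ext i; fin_cases i <;> simp⟩

end Steps

theorem isCoprime_of_isUnit_mul_sub_mul {R : Type*} [CommRing R] {p q r s : R}
    (h : IsUnit (p * s - q * r)) : IsCoprime p r := by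
  obtain ⟨u, hu⟩ := h
  exact ⟨↑u⁻¹ * s, -(↑u⁻¹ * q), by linear_combination (-(↑u⁻¹ : R)) * hu + Units.inv_mul u⟩

theorem intCast_mul_add_mul_pos {m n : ℤ} {x y : ℝ} (hm : 0 ≤ m) (hn : 0 ≤ n) (hmn : 0 < m + n)
    (hx : 0 < x) (hy : 0 < y) : 0 < (m : ℝ) * x + n * y := by
  rcases hm.lt_or_eq with hm | rfl
  · exact add_pos_of_pos_of_nonneg (mul_pos (by exact_mod_cast hm) hx)
      (mul_nonneg (by exact_mod_cast hn) hy.le)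
  · rw [Int.cast_zero, zero_mul, zero_add]
    exact mul_pos (by exact_mod_cast (show 0 < n by omega)) hy

theorem nonneg_unimodular_cases {p q r s : ℤ} (hp : 0 ≤ p) (hq : 0 ≤ q) (hr : 0 ≤ r) (hs : 0 ≤ s)
    (hdet : IsUnit (p * s - q * r)) :
    (p = 1 ∧ q = 0 ∧ r = 0 ∧ s = 1) ∨ (p = 0 ∧ q = 1 ∧ r = 1 ∧ s = 0) ∨
      (r ≤ p ∧ s ≤ q) ∨ (p ≤ r ∧ q ≤ s) := by
  have hd := Int.isUnit_iff.1 hdet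
  by_cases h₁ : r ≤ p ∧ s ≤ q
  · tauto
  by_cases h₂ : p ≤ r ∧ q ≤ s
  · tauto
  rcases lt_or_ge r p with hrp | hpr
  · have hqs : q < s := by omega
    have hprod : (r + 1) * (q + 1) ≤ p * s := mul_le_mul hrp hqs (by omega) hp
    obtain ⟨rfl, rfl⟩ : q = 0 ∧ r = 0 := by
      have : q + r ≤ 0 := by rcases hd with h | h <;> nlinarith
      omega
    have hps : p * s = 1 := by simpa using hd.resolve_right (by nlinarith)
    left
    exact ⟨Int.eq_one_of_mul_eq_one_right hp hps, rfl, rfl, Int.eq_one_of_mul_eq_one_left hs hps⟩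
  · have hrp : p < r := by omega
    have hsq : s < q := by omega
    have hprod : (p + 1) * (s + 1) ≤ r * q := mul_le_mul hrp hsq (by omega) hr
    obtain ⟨rfl, rfl⟩ : p = 0 ∧ s = 0 := by
      have : p + s ≤ 0 := by rcases hd with h | h <;> nlinarith
      omega
    have hqr : q * r = 1 := by simpa using hd.resolve_left (by nlinarith)
    right; left
    exact ⟨rfl, Int.eq_one_of_mul_eq_one_right hq hqr, Int.eq_one_of_mul_eq_one_left hr hqr, rfl⟩

theorem admPath_const_of_isCoprime {t : ℝ} (ht : 0 < t) (u w : ℤ) (hu : 0 < u) (hw : 0 < w)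
    (huw : IsCoprime u w) : AdmPath ![t, t] ![u * t, w * t] := by
  have hpos : ∀ n : ℤ, 0 < n → 0 < (n : ℝ) * t := fun n hn => mul_pos (by exact_mod_cast hn) ht
  rcases lt_trichotomy u w with hlt | rfl | hgt
  · have ih := admPath_const_of_isCoprime ht u (w - u) hu (by omega)
      (by simpa [sub_eq_add_neg] using huw.add_mul_left_right (-1))
    refine ih.trans (.single (vec2_pos (hpos _ hu) (hpos _ (by omega)))
      (vec2_pos (hpos _ hu) (hpos _ hw)) ?_)
    convert admStep_add₂ _ _ using 3
    push_cast; ring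
  · obtain rfl : u = 1 := by
      rcases Int.isUnit_iff.1 (isCoprime_self.1 huw) with h | h <;> omega
    simpa using AdmPath.refl (vec2_pos ht ht)
  · have ih := admPath_const_of_isCoprime ht (u - w) w (by omega) hw
      (by simpa [sub_eq_add_neg] using huw.add_mul_right_left (-1))
    refine ih.trans (.single (vec2_pos (hpos _ (by omega)) (hpos _ hw))
      (vec2_pos (hpos _ hu) (hpos _ hw)) ?_)
    convert admStep_add₁ _ _ using 3
    push_cast; ring
termination_by (u + w).toNat

def HasAdmPaths (p q r s : ℤ) : Prop :=
  ∀ x y : ℝ, 0 < x → 0 < y → 0 < p * x + q * y → 0 < r * x + s * y →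
    AdmPath ![x, y] ![p * x + q * y, r * x + s * y]

namespace HasAdmPaths

variable {p q r s : ℤ}

theorem one : HasAdmPaths 1 0 0 1 := fun x y hx hy _ _ => by
  simpa using AdmPath.refl (vec2_pos hx hy)

theorem swap : HasAdmPaths 0 1 1 0 := fun x y hx hy _ _ => by
  simpa using AdmPath.single (vec2_pos hx hy) (vec2_pos hy hx) (admStep_swap x y)

theorem of_row₁_nonpos (hp : p ≤ 0) (hq : q ≤ 0) : HasAdmPaths p q r s := by
  intro x y hx hy h₁ _
  have hp' : (p : ℝ) ≤ 0 := by exact_mod_cast hp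
  have hq' : (q : ℝ) ≤ 0 := by exact_mod_cast hq
  nlinarith

theorem of_swap_rows (h : HasAdmPaths r s p q) : HasAdmPaths p q r s := by
  intro x y hx hy h₁ h₂
  exact (h x y hx hy h₂ h₁).trans (.single (vec2_pos h₂ h₁) (vec2_pos h₁ h₂) (admStep_swap _ _))

theorem of_swap_cols (h : HasAdmPaths q p s r) : HasAdmPaths p q r s := by
  intro x y hx hy h₁ h₂
  have hpath := h y x hy hx (by linarith) (by linarith)
  rw [add_comm (q * y : ℝ), add_comm (s * y : ℝ)] at hpath
  exact (AdmPath.single (vec2_pos hx hy) (vec2_pos hy hx) (admStep_swap x y)).trans hpath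

theorem of_row₂_nonpos (hr : r ≤ 0) (hs : s ≤ 0) : HasAdmPaths p q r s :=
  of_swap_rows (of_row₁_nonpos hr hs)

theorem of_add_row₁ (h : HasAdmPaths (p + r) (q + s) r s) : HasAdmPaths p q r s := by
  intro x y hx hy h₁ h₂
  have hsum : ((p + r : ℤ) : ℝ) * x + ((q + s : ℤ) : ℝ) * y = p * x + q * y + (r * x + s * y) := by
    push_cast; ring
  have hpath := h x y hx hy (hsum ▸ add_pos h₁ h₂) h₂
  rw [hsum] at hpath
  exact hpath.trans (.single (vec2_pos (add_pos h₁ h₂) h₂) (vec2_pos h₁ h₂) (admStep_sub₁ _ _))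

theorem of_add_row₂ (h : HasAdmPaths p q (r + p) (s + q)) : HasAdmPaths p q r s :=
  of_swap_rows (of_add_row₁ (of_swap_rows h))

theorem of_sub_row₁ (h : HasAdmPaths (p - r) (q - s) r s) (hpr : 0 ≤ p - r) (hqs : 0 ≤ q - s)
    (hne : 0 < p - r + (q - s)) : HasAdmPaths p q r s := by
  intro x y hx hy h₁ h₂
  have hdiff := intCast_mul_add_mul_pos hpr hqs hne hx hy
  have hsum : ((p - r : ℤ) : ℝ) * x + ((q - s : ℤ) : ℝ) * y + (r * x + s * y) = p * x + q * y := by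
    push_cast; ring
  have hstep := admStep_add₁ (((p - r : ℤ) : ℝ) * x + ((q - s : ℤ) : ℝ) * y) (r * x + s * y)
  rw [hsum] at hstep
  exact (h x y hx hy hdiff h₂).trans (.single (vec2_pos hdiff h₂) (vec2_pos h₁ h₂) hstep)

theorem of_sub_row₂ (h : HasAdmPaths p q (r - p) (s - q)) (hrp : 0 ≤ r - p) (hsq : 0 ≤ s - q)
    (hne : 0 < r - p + (s - q)) : HasAdmPaths p q r s :=
  of_swap_rows (of_sub_row₁ (of_swap_rows h) hrp hsq hne)

theorem of_add_cols (hdet : IsUnit (p * s - q * r)) (h₁ : HasAdmPaths p (p + q) r (r + s))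
    (h₂ : HasAdmPaths (p + q) q (r + s) s) : HasAdmPaths p q r s := by
  intro x y hx hy he₁ he₂
  rcases lt_trichotomy y x with hyx | rfl | hxy
  · have hpath := h₁ (x - y) y (by linarith) hy (by push_cast; linarith) (by push_cast; linarith)
    have e₁ : (p : ℝ) * (x - y) + ((p + q : ℤ) : ℝ) * y = p * x + q * y := by push_cast; ring
    have e₂ : (r : ℝ) * (x - y) + ((r + s : ℤ) : ℝ) * y = r * x + s * y := by push_cast; ring
    rw [e₁, e₂] at hpath
    refine .trans (.single (vec2_pos hx hy) (vec2_pos (by linarith) hy) ?_) hpath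
    simpa using admStep_sub₁ (x - y) y
  · have hu : 0 < p + q := by
      have : (0 : ℝ) < ((p + q : ℤ) : ℝ) * y := by push_cast; linarith
      exact_mod_cast pos_of_mul_pos_left this hy.le
    have hw : 0 < r + s := by
      have : (0 : ℝ) < ((r + s : ℤ) : ℝ) * y := by push_cast; linarith
      exact_mod_cast pos_of_mul_pos_left this hy.le
    have hdet' : IsUnit ((p + q) * s - q * (r + s)) := by convert hdet using 1; ring
    convert admPath_const_of_isCoprime hy _ _ hu hw (isCoprime_of_isUnit_mul_sub_mul hdet')
      using 3 <;> push_cast <;> ring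
  · have hpath := h₂ x (y - x) hx (by linarith) (by push_cast; linarith) (by push_cast; linarith)
    have e₁ : ((p + q : ℤ) : ℝ) * x + q * (y - x) = p * x + q * y := by push_cast; ring
    have e₂ : ((r + s : ℤ) : ℝ) * x + s * (y - x) = r * x + s * y := by push_cast; ring
    rw [e₁, e₂] at hpath
    refine .trans (.single (vec2_pos hx hy) (vec2_pos hx (by linarith)) ?_) hpath
    simpa using admStep_sub₂ x (y - x)

end HasAdmPaths

def negMass (p q r s : ℤ) : ℕ := (-p).toNat + (-q).toNat + (-r).toNat + (-s).toNat

def absMass (p q r s : ℤ) : ℕ := p.natAbs + q.natAbs + r.natAbs + s.natAbs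

def entryRank (p q r s : ℤ) : ℕ ×ₗ ℕ := toLex (negMass p q r s, absMass p q r s)

section Reduction

variable {p q r s : ℤ}

theorem entryRank_lt_of_negMass_lt {p' q' r' s' : ℤ} (h : negMass p' q' r' s' < negMass p q r s) :
    entryRank p' q' r' s' < entryRank p q r s :=
  Prod.Lex.toLex_lt_toLex.2 (Or.inl h)

theorem entryRank_lt_of_absMass_lt {p' q' r' s' : ℤ} (hneg : negMass p' q' r' s' = negMass p q r s)
    (habs : absMass p' q' r' s' < absMass p q r s) : entryRank p' q' r' s' < entryRank p q r s :=
  Prod.Lex.toLex_lt_toLex.2 (Or.inr ⟨hneg, habs⟩)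

theorem entryRank_swap_rows : entryRank r s p q = entryRank p q r s := by
  unfold entryRank negMass absMass; congr 2 <;> ring

theorem entryRank_swap_cols : entryRank q p s r = entryRank p q r s := by
  unfold entryRank negMass absMass; congr 2 <;> ring

def HasAdmPathsBelow (ρ : ℕ ×ₗ ℕ) : Prop :=
  ∀ p q r s : ℤ, entryRank p q r s < ρ → IsUnit (p * s - q * r) → HasAdmPaths p q r s

theorem HasAdmPaths.of_nonneg (hp : 0 ≤ p) (hq : 0 ≤ q) (hr : 0 ≤ r) (hs : 0 ≤ s)
    (hdet : IsUnit (p * s - q * r)) (ih : HasAdmPathsBelow (entryRank p q r s)) :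
    HasAdmPaths p q r s := by
  have hpq : 0 < p + q := by
    by_contra!
    obtain ⟨rfl, rfl⟩ : p = 0 ∧ q = 0 := by omega
    simp at hdet
  have hrs : 0 < r + s := by
    by_contra!
    obtain ⟨rfl, rfl⟩ : r = 0 ∧ s = 0 := by omega
    simp at hdet
  have hne : ¬(p = r ∧ q = s) := by
    rintro ⟨rfl, rfl⟩
    simp [mul_comm] at hdet
  rcases nonneg_unimodular_cases hp hq hr hs hdet with
    ⟨rfl, rfl, rfl, rfl⟩ | ⟨rfl, rfl, rfl, rfl⟩ | ⟨hrp, hsq⟩ | ⟨hpr, hqs⟩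
  · exact one
  · exact swap
  · refine of_sub_row₁ (ih _ _ _ _ ?_ (by convert hdet using 1; ring)) (by omega) (by omega)
      (by omega)
    exact entryRank_lt_of_absMass_lt (by unfold negMass; omega) (by unfold absMass; omega)
  · refine of_sub_row₂ (ih _ _ _ _ ?_ (by convert hdet using 1; ring)) (by omega) (by omega)
      (by omega)
    exact entryRank_lt_of_absMass_lt (by unfold negMass; omega) (by unfold absMass; omega)

theorem HasAdmPaths.of_q_neg (hq : q < 0) (hdet : IsUnit (p * s - q * r))
    (ih : HasAdmPathsBelow (entryRank p q r s)) : HasAdmPaths p q r s := by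
  rcases le_or_gt p 0 with hp | hp
  · exact of_row₁_nonpos hp hq.le
  rcases lt_or_ge 0 s with hs | hs
  · rcases le_or_gt 0 (p + r) with hpr | hpr
    · refine of_add_row₁ (ih _ _ _ _ ?_ (by convert hdet using 1; ring))
      exact entryRank_lt_of_negMass_lt (by unfold negMass; omega)
    refine of_add_row₂ ?_
    rcases le_or_gt (s + q) 0 with hsq | hsq
    · exact of_row₂_nonpos (by omega) hsq
    refine ih _ _ _ _ ?_ (by convert hdet using 1; ring)
    exact entryRank_lt_of_negMass_lt (by unfold negMass; omega)
  rcases le_or_gt r 0 with hr | hr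
  · exact of_row₂_nonpos hr hs
  refine of_add_cols hdet (ih _ _ _ _ ?_ (by convert hdet using 1; ring)) ?_
  · exact entryRank_lt_of_negMass_lt (by unfold negMass; omega)
  rcases le_or_gt (p + q) 0 with hpq | hpq
  · exact of_row₁_nonpos hpq hq.le
  rcases le_or_gt (r + s) 0 with hrs | hrs
  · exact of_row₂_nonpos hrs hs
  refine ih _ _ _ _ ?_ (by convert hdet using 1; ring)
  exact entryRank_lt_of_absMass_lt (by unfold negMass; omega) (by unfold absMass; omega)

theorem hasAdmPaths_of_isUnit (p q r s : ℤ) (hdet : IsUnit (p * s - q * r)) :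
    HasAdmPaths p q r s := by
  have ih : HasAdmPathsBelow (entryRank p q r s) :=
    fun p' q' r' s' _ h => hasAdmPaths_of_isUnit p' q' r' s' h
  by_cases hnonneg : 0 ≤ p ∧ 0 ≤ q ∧ 0 ≤ r ∧ 0 ≤ s
  · exact .of_nonneg hnonneg.1 hnonneg.2.1 hnonneg.2.2.1 hnonneg.2.2.2 hdet ih
  -- swapping rows and/or columns moves a negative entry to the position of `q`
  rcases (by omega : p < 0 ∨ q < 0 ∨ r < 0 ∨ s < 0) with hp | hq | hr | hs
  · refine .of_swap_cols (.of_q_neg hp (by convert hdet.neg using 1; ring) ?_)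
    rwa [entryRank_swap_cols]
  · exact .of_q_neg hq hdet ih
  · refine .of_swap_rows (.of_swap_cols (.of_q_neg hr (by convert hdet using 1; ring) ?_))
    rwa [entryRank_swap_cols, entryRank_swap_rows]
  · refine .of_swap_rows (.of_q_neg hs (by convert hdet.neg using 1; ring) ?_)
    rwa [entryRank_swap_rows]
termination_by entryRank p q r s
decreasing_by assumption

end Reduction

theorem admPath_of_glZ_general
    (d e : Fin 2 → ℝ) (hd : ∀ i, 0 < d i) (he : ∀ i, 0 < e i)
    (A : Matrix (Fin 2) (Fin 2) ℤ) (hA : IsUnit A.det)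
    (hAd : (A.map (Int.cast : ℤ → ℝ)).mulVec d = e) :
    AdmPath d e := by
  have hd' : ![d 0, d 1] = d := by ext i; fin_cases i <;> rfl
  have he' : e = ![A 0 0 * d 0 + A 0 1 * d 1, A 1 0 * d 0 + A 1 1 * d 1] := by
    rw [← hAd]; ext i; fin_cases i <;> simp [Matrix.mulVec, dotProduct, Fin.sum_univ_two]
  subst he'
  rw [Matrix.det_fin_two] at hA
  have hpath := hasAdmPaths_of_isUnit _ _ _ _ hA (d 0) (d 1) (hd 0) (hd 1) (he 0) (he 1)
  rwa [hd'] at hpath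

/-- **Lemma B.4 of Chekanov–Schlenk.** Given `d, e ∈ ℝ₊²` generating the same additive
subgroup of `ℝ` and `A ∈ GL(2,ℤ)` with `A d = e`, there is an admissible path from
`d` to `e` (in dimension 2 the admissible operators are exactly
`P₁₂, P₂₁, M₁₂, M₂₁, I₁₂`). -/
theorem admPath_of_glZ
    (d e : Fin 2 → ℝ) (hd : ∀ i, 0 < d i) (he : ∀ i, 0 < e i)
    (hgen : AddSubgroup.closure (Set.range d) = AddSubgroup.closure (Set.range e))
    (A : Matrix (Fin 2) (Fin 2) ℤ) (hA : IsUnit A.det)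
    (hAd : (A.map (Int.cast : ℤ → ℝ)).mulVec d = e) :
    AdmPath d e :=
  admPath_of_glZ_general d e hd he A hA hAd
end

section
/- Let d = (d₁,…,d_k) and e = (e₁,…,e_k) be vectors of positive reals such that the additive subgroup of ℝ generated by the dᵢ equals that generated by the eᵢ, and suppose this common subgroup has rank 1 (is infinite cyclic). Then there is a low admissible path from d to e: a finite sequence of vectors in ℝ₊ᵏ starting at d and ending at e, each obtained from the previous by applying P_{ij}, M_{ij}, or I_{ij}, such that every vector in the sequence is ≤ d or ≤ e in the componentwise-up-to-permutation order. -/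
/-- `v ≤ w` up to a permutation of the components. -/
def PermLE {k : ℕ} (v w : Fin k → ℝ) : Prop :=
  ∃ σ : Equiv.Perm (Fin k), ∀ i, v i ≤ w (σ i)

/-- A low admissible path from `d` to `e`: a finite sequence of positive vectors from
`d` to `e`, each step admissible, with every vector of the sequence `≤ d` or `≤ e`
in the componentwise-up-to-permutation order. -/
def LowAdmPath {k : ℕ} (d e : Fin k → ℝ) : Prop :=
  ∃ (l : ℕ) (f : ℕ → Fin k → ℝ),
    f 0 = d ∧ f l = e ∧
    (∀ s < l, AdmStep (f s) (f (s + 1))) ∧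
    (∀ s ≤ l, ∀ i, 0 < f s i) ∧
    (∀ s ≤ l, PermLE (f s) d ∨ PermLE (f s) e)

/-!
Let `x > 0` generate `⟨d⟩ = ⟨e⟩`. Every coordinate of `d` is a positive multiple of `x`, so
Euclid's algorithm on the coordinates (subtract a smaller coordinate from a larger one, a move
`M_{ij}`) only lowers coordinates, keeps them positive, and stops at a constant vector
`(c, …, c)`. Admissible moves preserve the generated subgroup, so `⟨c⟩ = ⟨d⟩`; the same holds
for `e`, and since `⟨c⟩` determines `c > 0`, both descents end at the same vector. The descent
from `d` followed by the reversed descent from `e` is a low admissible path.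
-/

open Relation

theorem Relation.ReflTransGen.exists_seq {α : Type*} {r : α → α → Prop} {a b : α}
    (h : ReflTransGen r a b) :
    ∃ (l : ℕ) (f : ℕ → α), f 0 = a ∧ f l = b ∧ ∀ s < l, r (f s) (f (s + 1)) := by
  induction h with
  | refl => exact ⟨0, fun _ => a, rfl, rfl, by simp⟩
  | @tail b c _ hbc ih =>
    obtain ⟨l, f, h0, hl, hf⟩ := ih
    refine ⟨l + 1, Function.update f (l + 1) c, by simpa using h0, by simp, fun s hs => ?_⟩
    rcases (Nat.lt_succ_iff.mp hs).lt_or_eq with hs | rfl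
    · simpa [Function.update_of_ne, hs.ne, (Nat.lt_succ_of_lt hs).ne] using hf s hs
    · simpa [hl] using hbc

theorem le_of_pos_of_mem_zmultiples {α : Type*} [AddCommGroup α] [LinearOrder α]
    [IsOrderedAddMonoid α] {x y : α} (hx : 0 < x) (hy : 0 < y)
    (h : y ∈ AddSubgroup.zmultiples x) : x ≤ y := by
  obtain ⟨n, rfl⟩ := h
  have hn : 0 < n := (zsmul_lt_zsmul_iff_left hx).mp (by simpa using hy)
  simpa using zsmul_le_zsmul_left hx.le (show 1 ≤ n by omega)

theorem Finset.sum_update_sub {ι G : Type*} [Fintype ι] [DecidableEq ι] [AddCommGroup G]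
    (v : ι → G) (i j : ι) : ∑ t, Function.update v i (v i - v j) t = ∑ t, v t - v j := by
  rw [Finset.sum_update_of_mem (Finset.mem_univ i), ← Finset.add_sum_erase _ _ (Finset.mem_univ i)]
  simp [Finset.sdiff_singleton_eq_erase]

variable {k : ℕ}

theorem PermLE.of_le {v w : Fin k → ℝ} (h : v ≤ w) : PermLE v w :=
  ⟨Equiv.refl _, h⟩

theorem AdmStep.symm {v w : Fin k → ℝ} (h : AdmStep v w) : AdmStep w v := by
  obtain ⟨i, j, hij, rfl | rfl | rfl⟩ := h
  · exact ⟨i, j, hij, .inr (.inl (by simp [Function.update_of_ne hij.symm]))⟩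
  · exact ⟨i, j, hij, .inl (by simp [Function.update_of_ne hij.symm])⟩
  · exact ⟨i, j, hij, .inr (.inr (by ext; simp))⟩

theorem AdmStep.closure_range_le {v w : Fin k → ℝ} (h : AdmStep v w) :
    AddSubgroup.closure (Set.range w) ≤ AddSubgroup.closure (Set.range v) := by
  have hv (t : Fin k) : v t ∈ AddSubgroup.closure (Set.range v) :=
    AddSubgroup.subset_closure ⟨t, rfl⟩
  rw [AddSubgroup.closure_le]
  rintro _ ⟨t, rfl⟩
  obtain ⟨i, j, -, rfl | rfl | rfl⟩ := h
  · rw [Function.update_apply]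
    split_ifs
    exacts [add_mem (hv i) (hv j), hv t]
  · rw [Function.update_apply]
    split_ifs
    exacts [sub_mem (hv i) (hv j), hv t]
  · exact hv _

theorem AdmStep.closure_range_eq {v w : Fin k → ℝ} (h : AdmStep v w) :
    AddSubgroup.closure (Set.range w) = AddSubgroup.closure (Set.range v) :=
  le_antisymm h.closure_range_le h.symm.closure_range_le

def AdmStepIn (Q : (Fin k → ℝ) → Prop) (v w : Fin k → ℝ) : Prop :=
  AdmStep v w ∧ Q v ∧ Q w

namespace AdmStepIn

variable {Q : (Fin k → ℝ) → Prop} {v w : Fin k → ℝ}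

instance : Std.Symm (AdmStepIn Q) :=
  ⟨fun _ _ ⟨h, hv, hw⟩ => ⟨h.symm, hw, hv⟩⟩

theorem reflTransGen_mono {Q' : (Fin k → ℝ) → Prop} (hQ : ∀ u, Q u → Q' u)
    (h : ReflTransGen (AdmStepIn Q) v w) : ReflTransGen (AdmStepIn Q') v w :=
  ReflTransGen.mono (fun _ _ h => ⟨h.1, hQ _ h.2.1, hQ _ h.2.2⟩) _ _ h

theorem reflTransGen_right (hv : Q v) (h : ReflTransGen (AdmStepIn Q) v w) : Q w := by
  rcases h.cases_tail with rfl | ⟨_, _, hstep⟩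
  exacts [hv, hstep.2.2]

theorem closure_range_eq_of_reflTransGen (h : ReflTransGen (AdmStepIn Q) v w) :
    AddSubgroup.closure (Set.range w) = AddSubgroup.closure (Set.range v) := by
  induction h with
  | refl => rfl
  | tail _ hstep ih => exact hstep.1.closure_range_eq.trans ih

end AdmStepIn

def PosBelow (v w : Fin k → ℝ) : Prop :=
  (∀ i, 0 < w i) ∧ w ≤ v

/-- Euclid's algorithm: each subtraction lowers the coordinate sum by at least `x`. -/
theorem exists_reflTransGen_const_of_sum_le {x : ℝ} (hx : 0 < x) (N : ℕ) (v : Fin k → ℝ)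
    (hpos : ∀ i, 0 < v i) (hmem : ∀ i, v i ∈ AddSubgroup.zmultiples x)
    (hsum : ∑ i, v i ≤ N * x) :
    ∃ u, (∀ i j, u i = u j) ∧ ReflTransGen (AdmStepIn (PosBelow v)) v u := by
  induction N generalizing v with
  | zero =>
    refine ⟨v, fun i => absurd ?_ (hpos i).not_ge, .refl⟩
    simpa using (Finset.single_le_sum (fun t _ => (hpos t).le) (Finset.mem_univ i)).trans hsum
  | succ N ih =>
    by_cases hconst : ∀ i j, v i = v j
    · exact ⟨v, hconst, .refl⟩
    obtain ⟨i, j, hji⟩ : ∃ i j, v j < v i := by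
      push Not at hconst
      obtain ⟨i, j, hij⟩ := hconst
      rcases hij.lt_or_gt with h | h
      exacts [⟨j, i, h⟩, ⟨i, j, h⟩]
    set w := Function.update v i (v i - v j) with hw
    have hwv : w ≤ v := by
      intro t
      rw [hw, Function.update_apply]
      split_ifs with ht
      · subst ht; linarith [hpos j]
      · exact le_rfl
    have hwpos : ∀ t, 0 < w t := by
      intro t
      rw [hw, Function.update_apply]
      split_ifs
      exacts [sub_pos.mpr hji, hpos t]
    have hwmem : ∀ t, w t ∈ AddSubgroup.zmultiples x := by
      intro t
      rw [hw, Function.update_apply]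
      split_ifs
      exacts [sub_mem (hmem i) (hmem j), hmem t]
    have hwsum : ∑ t, w t ≤ N * x := by
      rw [hw, Finset.sum_update_sub]
      have := le_of_pos_of_mem_zmultiples hx (hpos j) (hmem j)
      push_cast at hsum
      linarith
    obtain ⟨u, hu, hwu⟩ := ih w hwpos hwmem hwsum
    have hstep : AdmStepIn (PosBelow v) v w :=
      ⟨⟨i, j, fun hij => (hij ▸ hji).false, .inr (.inl rfl)⟩, ⟨hpos, le_rfl⟩, ⟨hwpos, hwv⟩⟩
    exact ⟨u, hu, .head hstep (AdmStepIn.reflTransGen_mono (fun _ h => ⟨h.1, h.2.trans hwv⟩) hwu)⟩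

theorem exists_reflTransGen_const {x : ℝ} (hx : 0 < x) {v : Fin k → ℝ}
    (hpos : ∀ i, 0 < v i) (hmem : ∀ i, v i ∈ AddSubgroup.zmultiples x) :
    ∃ u, (∀ i j, u i = u j) ∧ ReflTransGen (AdmStepIn (PosBelow v)) v u := by
  obtain ⟨N, hN⟩ := Archimedean.arch (∑ i, v i) hx
  exact exists_reflTransGen_const_of_sum_le hx N v hpos hmem (by simpa using hN)

theorem eq_of_closure_range_eq {u u' : Fin k → ℝ} (hu : ∀ i j, u i = u j)
    (hu' : ∀ i j, u' i = u' j) (hpos : ∀ i, 0 < u i) (hpos' : ∀ i, 0 < u' i)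
    (h : AddSubgroup.closure (Set.range u) = AddSubgroup.closure (Set.range u')) : u = u' := by
  funext i
  have hrange {v : Fin k → ℝ} (hv : ∀ i j, v i = v j) : Set.range v = {v i} :=
    Set.eq_singleton_iff_unique_mem.mpr ⟨⟨i, rfl⟩, fun _ ⟨j, hj⟩ => hj ▸ hv j i⟩
  rw [hrange hu, hrange hu', ← AddSubgroup.zmultiples_eq_closure,
    ← AddSubgroup.zmultiples_eq_closure,
    AddSubgroup.zmultiples_eq_zmultiples_iff
      (not_isOfFinAddOrder_of_isAddTorsionFree (hpos i).ne')] at h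
  rcases h with h | h
  · exact h
  · linarith [hpos i, hpos' i]

theorem lowAdmPath_of_reflTransGen {d e u : Fin k → ℝ} (he : ∀ i, 0 < e i)
    (hdu : ReflTransGen (AdmStepIn (PosBelow d)) d u)
    (heu : ReflTransGen (AdmStepIn (PosBelow e)) e u) : LowAdmPath d e := by
  let IsLow (w : Fin k → ℝ) : Prop := (∀ i, 0 < w i) ∧ (PermLE w d ∨ PermLE w e)
  have hde : ReflTransGen (AdmStepIn IsLow) d e :=
    (AdmStepIn.reflTransGen_mono (fun _ h => ⟨h.1, .inl (.of_le h.2)⟩) hdu).trans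
      (symm (AdmStepIn.reflTransGen_mono (fun _ h => ⟨h.1, .inr (.of_le h.2)⟩) heu))
  obtain ⟨l, f, h0, hl, hf⟩ := hde.exists_seq
  have hlow (s : ℕ) (hs : s ≤ l) : IsLow (f s) := by
    rcases hs.lt_or_eq with hs | rfl
    · exact (hf s hs).2.1
    · rw [hl]
      exact ⟨he, .inr (.of_le le_rfl)⟩
  exact ⟨l, f, h0, hl, fun s hs => (hf s hs).1, fun s hs => (hlow s hs).1,
    fun s hs => (hlow s hs).2⟩

/-- **Lemma B.3 of Chekanov–Schlenk (rank 1 case).** If `d, e ∈ ℝ₊ᵏ` generate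
the same additive subgroup of `ℝ` and this subgroup is infinite cyclic
(has rank 1), then there is a low admissible path from `d` to `e`. -/
theorem lowAdmPath_of_rank_one
    (k : ℕ) (d e : Fin k → ℝ) (hd : ∀ i, 0 < d i) (he : ∀ i, 0 < e i)
    (hgen : AddSubgroup.closure (Set.range d) = AddSubgroup.closure (Set.range e))
    (hrk : ∃ x : ℝ, x ≠ 0 ∧
      AddSubgroup.closure (Set.range d) = AddSubgroup.closure {x}) :
    LowAdmPath d e := by
  obtain ⟨x, hx0, hdx⟩ := hrk
  have hmem (v : Fin k → ℝ) (hv : AddSubgroup.closure (Set.range v) = AddSubgroup.closure {x})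
      (i : Fin k) : v i ∈ AddSubgroup.zmultiples |x| := by
    have : v i ∈ AddSubgroup.zmultiples x :=
      AddSubgroup.zmultiples_eq_closure x ▸ hv ▸ AddSubgroup.subset_closure ⟨i, rfl⟩
    rcases abs_choice x with h | h <;> simpa [h] using this
  obtain ⟨u, hu, hdu⟩ := exists_reflTransGen_const (abs_pos.mpr hx0) hd (hmem d hdx)
  obtain ⟨u', hu', heu'⟩ := exists_reflTransGen_const (abs_pos.mpr hx0) he (hmem e (hgen ▸ hdx))
  obtain rfl : u = u' := eq_of_closure_range_eq hu hu'
    (AdmStepIn.reflTransGen_right ⟨hd, le_rfl⟩ hdu).1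
    (AdmStepIn.reflTransGen_right ⟨he, le_rfl⟩ heu').1
    (by rw [AdmStepIn.closure_range_eq_of_reflTransGen hdu,
      AdmStepIn.closure_range_eq_of_reflTransGen heu', hgen])
  exact lowAdmPath_of_reflTransGen he hdu heu'
end

section
/- Define Ψ : W → ℂ², where W = {(z₁,z₂) ∈ ℂ² : |z₁| < |z₂|}, by Ψ(z₁,z₂) = (z₁ z₂/|z₂|, z₂ √(|z₂|² − |z₁|²)/|z₂|). Then Ψ is an injective map whose image is ℂ² ∖ {z₂ = 0}, and Ψ preserves the standard symplectic form ω₂ = dx₁∧dy₁ + dx₂∧dy₂. -/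
/-!
In symplectic polar coordinates `Ψ` keeps `ρ₁, θ₂` and shifts `θ₁` by `θ₂`, `ρ₂` by `-ρ₁`.
With `u = z₂ / |z₂|` it reads `(z₁, z₂) ↦ (u z₁, u ρ)`, `ρ = √(|z₂|² - |z₁|²)`, and it is inverted
on `{w₂ ≠ 0}` by `(w₁, w₂) ↦ (w₁ / u, u √(|w₁|² + |w₂|²))` with `u = w₂ / |w₂|`.

Its derivative is `v ↦ u (v₁ + α i z₁, ρ' + α i ρ)`, where `α = ω(z₂, v₂) / |z₂|²` is the
derivative of the argument of `z₂` and `ρ ρ' = ⟪z₂, v₂⟫ - ⟪z₁, v₁⟫`. The rotation by `u` preserves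
`ω`, and after expanding, the correction terms collapse to `α(w) ⟪z₂, v₂⟫ - α(v) ⟪z₂, w₂⟫`, which is
`ω(v₂, w₂)` because `⟪z, v⟫ ω(z, w) - ω(z, v) ⟪z, w⟫ = |z|² ω(v, w)` (that is, `dr ∧ dθ` is the
area form).
-/

open Complex RealInnerProductSpace

namespace ChekanovSchlenk

attribute [local instance] Complex.finrank_real_complex_fact

local notation "ω" => Complex.orientation.areaForm

noncomputable def phase (z : ℂ) : ℂ := z / (‖z‖ : ℂ)

lemma phase_mul_norm (z : ℂ) : phase z * ‖z‖ = z := by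
  rcases eq_or_ne z 0 with rfl | hz
  · simp [phase]
  · exact div_mul_cancel₀ z (by simpa using hz)

lemma norm_phase {z : ℂ} (hz : z ≠ 0) : ‖phase z‖ = 1 := by
  simp [phase, hz]

lemma phase_ne_zero {z : ℂ} (hz : z ≠ 0) : phase z ≠ 0 := by
  simp [phase, hz]

lemma norm_phase_mul {z : ℂ} (hz : z ≠ 0) (a : ℂ) : ‖phase z * a‖ = ‖a‖ := by
  rw [norm_mul, norm_phase hz, one_mul]

lemma phase_mul_ofReal (z : ℂ) {r : ℝ} (hr : 0 < r) : phase (z * r) = phase z := by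
  simp only [phase, norm_mul, norm_real, Real.norm_of_nonneg hr.le, ofReal_mul]
  rw [mul_div_mul_right _ _ (by exact_mod_cast hr.ne')]

lemma phase_phase_mul_ofReal {z : ℂ} (hz : z ≠ 0) {r : ℝ} (hr : 0 < r) :
    phase (phase z * r) = phase z := by
  rw [phase_mul_ofReal _ hr, phase, norm_phase hz, ofReal_one, div_one]

lemma norm_phase_mul_ofReal {z : ℂ} (hz : z ≠ 0) {r : ℝ} (hr : 0 ≤ r) :
    ‖phase z * r‖ = r := by
  rw [norm_phase_mul hz, norm_real, Real.norm_of_nonneg hr]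

lemma sq_norm_mul_eq_inner_add_areaForm_mul (z v : ℂ) :
    (‖z‖ ^ 2 : ℝ) * v = (⟪z, v⟫ + ω z v * I) * z := by
  have h := Complex.orientation.kahler_apply_apply z v
  rw [Complex.kahler, Complex.real_smul] at h
  rw [← h, mul_assoc, conj_mul', ofReal_pow, mul_comm]

lemma areaForm_mul_mul (u v w : ℂ) : ω (u * v) (u * w) = ‖u‖ ^ 2 * ω v w := by
  simp only [Complex.areaForm, map_mul]
  rw [mul_mul_mul_comm, conj_mul', ← ofReal_pow, im_ofReal_mul]

lemma areaForm_add_smul_I_mul (v w z : ℂ) (a b : ℝ) :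
    ω (v + a • (I * z)) (w + b • (I * z)) = ω v w + b * ⟪v, z⟫ - a * ⟪z, w⟫ := by
  simp only [← Complex.rightAngleRotation, map_add, map_smul, LinearMap.add_apply,
    LinearMap.smul_apply, Orientation.areaForm_rightAngleRotation_left,
    Orientation.areaForm_rightAngleRotation_right, Orientation.areaForm_apply_self, smul_eq_mul]
  ring

lemma hasFDerivAt_norm {F : Type*} [NormedAddCommGroup F] [InnerProductSpace ℝ F] {x : F}
    (hx : x ≠ 0) : HasFDerivAt (‖·‖) (‖x‖⁻¹ • innerSL ℝ x) x := by
  have h := ((hasFDerivAt_id x).norm_sq).sqrt (by simpa using hx)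
  simp only [id, Real.sqrt_sq (norm_nonneg _)] at h
  refine h.congr_fderiv ?_
  ext v
  simp
  field_simp

lemma hasFDerivAt_phase {z : ℂ} (hz : z ≠ 0) :
    HasFDerivAt phase
      ((Complex.orientation.areaForm' z).smulRight (I * phase z / (‖z‖ ^ 2 : ℝ))) z := by
  have hz' : ‖z‖ ≠ 0 := norm_ne_zero_iff.mpr hz
  have h := ((hasDerivAt_inv hz').comp_hasFDerivAt z (hasFDerivAt_norm hz)).fun_smul
    (hasFDerivAt_id z)
  simp only [Function.comp_apply, id] at h
  have hfun : (fun y : ℂ => ‖y‖⁻¹ • y) = phase := by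
    ext1 y; simp [phase, div_eq_inv_mul, Complex.real_smul]
  rw [hfun] at h
  refine h.congr_fderiv ?_
  ext v
  simp only [add_apply, smul_apply, smul_eq_mul,
    ContinuousLinearMap.smulRight_apply, innerSL_apply_apply, ContinuousLinearMap.id_apply,
    Orientation.areaForm'_apply, LinearMap.coe_toContinuousLinearMap', Complex.real_smul, phase]
  have hzC : (‖z‖ : ℂ) ≠ 0 := ofReal_ne_zero.mpr hz'
  have := sq_norm_mul_eq_inner_add_areaForm_mul z v
  push_cast at this ⊢
  field_simp
  linear_combination this

noncomputable def psi (p : ℂ × ℂ) : ℂ × ℂ :=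
  (phase p.2 * p.1, phase p.2 * (√(‖p.2‖ ^ 2 - ‖p.1‖ ^ 2) : ℝ))

noncomputable def psiInv (w : ℂ × ℂ) : ℂ × ℂ :=
  (w.1 / phase w.2, phase w.2 * (√(‖w.1‖ ^ 2 + ‖w.2‖ ^ 2) : ℝ))

lemma snd_ne_zero_of_norm_lt {p : ℂ × ℂ} (hp : ‖p.1‖ < ‖p.2‖) : p.2 ≠ 0 :=
  norm_pos_iff.mp ((norm_nonneg _).trans_lt hp)

lemma sq_norm_sub_sq_norm_pos {p : ℂ × ℂ} (hp : ‖p.1‖ < ‖p.2‖) :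
    0 < ‖p.2‖ ^ 2 - ‖p.1‖ ^ 2 :=
  sub_pos.mpr (pow_lt_pow_left₀ hp (norm_nonneg _) two_ne_zero)

lemma mapsTo_psi : Set.MapsTo psi {p | ‖p.1‖ < ‖p.2‖} {w | w.2 ≠ 0} := fun _ hp =>
  mul_ne_zero (phase_ne_zero (snd_ne_zero_of_norm_lt hp))
    (ofReal_ne_zero.mpr (Real.sqrt_pos.mpr (sq_norm_sub_sq_norm_pos hp)).ne')

lemma mapsTo_psiInv : Set.MapsTo psiInv {w | w.2 ≠ 0} {p | ‖p.1‖ < ‖p.2‖} := by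
  intro w (hw : w.2 ≠ 0)
  show ‖w.1 / phase w.2‖ < ‖phase w.2 * (√(‖w.1‖ ^ 2 + ‖w.2‖ ^ 2) : ℝ)‖
  rw [norm_div, norm_phase hw, div_one, norm_phase_mul_ofReal hw (Real.sqrt_nonneg _),
    Real.lt_sqrt (norm_nonneg _), lt_add_iff_pos_right]
  exact pow_pos (norm_pos_iff.mpr hw) 2

lemma invOn_psiInv_psi : Set.InvOn psiInv psi {p | ‖p.1‖ < ‖p.2‖} {w | w.2 ≠ 0} := by
  constructor
  · intro p (hp : ‖p.1‖ < ‖p.2‖)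
    have hz := snd_ne_zero_of_norm_lt hp
    have hd := sq_norm_sub_sq_norm_pos hp
    have hs := Real.sqrt_pos.mpr hd
    simp only [psiInv, psi, phase_phase_mul_ofReal hz hs, norm_phase_mul_ofReal hz hs.le,
      norm_phase_mul hz, Real.sq_sqrt hd.le, add_sub_cancel, Real.sqrt_sq (norm_nonneg _),
      phase_mul_norm, mul_div_cancel_left₀ _ (phase_ne_zero hz)]
  · intro w (hw : w.2 ≠ 0)
    have hsum : 0 ≤ ‖w.1‖ ^ 2 + ‖w.2‖ ^ 2 := by positivity
    have hR : 0 < √(‖w.1‖ ^ 2 + ‖w.2‖ ^ 2) := by positivity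
    simp only [psiInv, psi, phase_phase_mul_ofReal hw hR, norm_phase_mul_ofReal hw hR.le,
      norm_div, norm_phase hw, div_one, Real.sq_sqrt hsum,
      add_sub_cancel_left, Real.sqrt_sq (norm_nonneg _), phase_mul_norm,
      mul_div_cancel₀ _ (phase_ne_zero hw)]

lemma bijOn_psi : Set.BijOn psi {p | ‖p.1‖ < ‖p.2‖} {w | w.2 ≠ 0} :=
  invOn_psiInv_psi.bijOn mapsTo_psi mapsTo_psiInv

lemma psi_eq : psi = fun p : ℂ × ℂ => (p.1 * p.2 / (‖p.2‖ : ℂ),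
    p.2 * (Real.sqrt (‖p.2‖ ^ 2 - ‖p.1‖ ^ 2) : ℂ) / (‖p.2‖ : ℂ)) := by
  ext1 p
  simp only [psi, phase]
  congr 1 <;> ring

lemma fderiv_psi_apply {p : ℂ × ℂ} (hp : ‖p.1‖ < ‖p.2‖) (v : ℂ × ℂ) :
    fderiv ℝ psi p v = phase p.2 •
      (v.1 + (ω p.2 v.2 / ‖p.2‖ ^ 2) • (I * p.1),
       (((⟪p.2, v.2⟫ - ⟪p.1, v.1⟫) / √(‖p.2‖ ^ 2 - ‖p.1‖ ^ 2) : ℝ) : ℂ)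
         + (ω p.2 v.2 / ‖p.2‖ ^ 2) • (I * (√(‖p.2‖ ^ 2 - ‖p.1‖ ^ 2) : ℝ))) := by
  have hz := snd_ne_zero_of_norm_lt hp
  have hd := sq_norm_sub_sq_norm_pos hp
  have hphase := (hasFDerivAt_phase hz).comp p hasFDerivAt_snd
  have hradius := ofRealCLM.hasFDerivAt.comp p
    ((hasFDerivAt_snd.norm_sq.sub hasFDerivAt_fst.norm_sq).sqrt hd.ne')
  have hpsi : HasFDerivAt psi _ p := (hphase.mul hasFDerivAt_fst).prodMk (hphase.mul hradius)
  rw [hpsi.fderiv]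
  simp only [ContinuousLinearMap.prod_apply, add_apply, smul_apply, smul_eq_mul,
    ContinuousLinearMap.comp_apply, ContinuousLinearMap.smulRight_apply, innerSL_apply_apply,
    Orientation.areaForm'_apply, LinearMap.coe_toContinuousLinearMap', Complex.real_smul,
    ContinuousLinearMap.coe_fst', ContinuousLinearMap.coe_snd', ofRealCLM_apply,
    Function.comp_apply, Pi.sub_apply, sub_apply, Prod.smul_mk, nsmul_eq_mul]
  have hN : (‖p.2‖ : ℂ) ≠ 0 := ofReal_ne_zero.mpr (norm_ne_zero_iff.mpr hz)
  have hR : (√(‖p.2‖ ^ 2 - ‖p.1‖ ^ 2) : ℂ) ≠ 0 :=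
    ofReal_ne_zero.mpr (Real.sqrt_pos.mpr hd).ne'
  push_cast
  congr 1 <;> field_simp

noncomputable def symplecticForm (X Y : ℂ × ℂ) : ℝ := ω X.1 Y.1 + ω X.2 Y.2

lemma symplecticForm_apply (X Y : ℂ × ℂ) : symplecticForm X Y =
    X.1.re * Y.1.im - X.1.im * Y.1.re + X.2.re * Y.2.im - X.2.im * Y.2.re := by
  simp only [symplecticForm, Complex.areaForm, mul_im, conj_re, conj_im]
  ring

lemma symplecticForm_smul {u : ℂ} (hu : ‖u‖ = 1) (X Y : ℂ × ℂ) :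
    symplecticForm (u • X) (u • Y) = symplecticForm X Y := by
  simp only [symplecticForm, Prod.smul_fst, Prod.smul_snd, smul_eq_mul, areaForm_mul_mul, hu,
    one_pow, one_mul]

lemma symplecticForm_fderiv_psi {p : ℂ × ℂ} (hp : ‖p.1‖ < ‖p.2‖) (v w : ℂ × ℂ) :
    symplecticForm (fderiv ℝ psi p v) (fderiv ℝ psi p w) = symplecticForm v w := by
  have hz := snd_ne_zero_of_norm_lt hp
  have hR : √(‖p.2‖ ^ 2 - ‖p.1‖ ^ 2) ≠ 0 :=
    (Real.sqrt_pos.mpr (sq_norm_sub_sq_norm_pos hp)).ne'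
  have hN : ‖p.2‖ ≠ 0 := norm_ne_zero_iff.mpr hz
  rw [fderiv_psi_apply hp, fderiv_psi_apply hp, symplecticForm_smul (norm_phase hz)]
  simp only [symplecticForm, areaForm_add_smul_I_mul]
  have key := Complex.orientation.inner_mul_areaForm_sub p.2 v.2 w.2
  have hω : ∀ a b : ℝ, ω (a : ℂ) (b : ℂ) = 0 := fun a b => by
    rw [Complex.areaForm, conj_ofReal, ← ofReal_mul, ofReal_im]
  have hinner : ∀ a b : ℝ, ⟪(a : ℂ), (b : ℂ)⟫ = a * b := fun a b => by
    rw [Complex.inner, conj_ofReal, ← ofReal_mul, ofReal_re, mul_comm]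
  simp only [hω, hinner, real_inner_comm p.1 v.1]
  field_simp
  linear_combination key

end ChekanovSchlenk

/-- **The map `Ψ` of Lemma 4.1 of Chekanov–Schlenk.** On
`W = {(z₁,z₂) ∈ ℂ² : |z₁| < |z₂|}`, the map
`Ψ(z₁,z₂) = (z₁z₂/|z₂|, z₂√(|z₂|²−|z₁|²)/|z₂|)` is injective, has image
`ℂ² ∖ {z₂ = 0}`, and preserves the standard symplectic form
`ω₂ = dx₁∧dy₁ + dx₂∧dy₂`. -/
theorem psi_injective_image_symplectic :
    ∀ (W : Set (ℂ × ℂ)) (Ψ : ℂ × ℂ → ℂ × ℂ),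
      W = {p : ℂ × ℂ | ‖p.1‖ < ‖p.2‖} →
      (Ψ = fun p =>
        (p.1 * p.2 / (‖p.2‖ : ℂ),
         p.2 * (Real.sqrt ((‖p.2‖) ^ 2 - (‖p.1‖) ^ 2) : ℂ)
           / (‖p.2‖ : ℂ))) →
      Set.InjOn Ψ W ∧
      Ψ '' W = {p : ℂ × ℂ | p.2 ≠ 0} ∧
      ∀ p ∈ W, ∀ v w : ℂ × ℂ,
        (fderiv ℝ Ψ p v).1.re * (fderiv ℝ Ψ p w).1.im
          - (fderiv ℝ Ψ p v).1.im * (fderiv ℝ Ψ p w).1.re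
          + (fderiv ℝ Ψ p v).2.re * (fderiv ℝ Ψ p w).2.im
          - (fderiv ℝ Ψ p v).2.im * (fderiv ℝ Ψ p w).2.re
        = v.1.re * w.1.im - v.1.im * w.1.re + v.2.re * w.2.im - v.2.im * w.2.re := by
  intro W Ψ hW hΨ
  obtain rfl : Ψ = ChekanovSchlenk.psi := hΨ.trans ChekanovSchlenk.psi_eq.symm
  subst hW
  refine ⟨ChekanovSchlenk.bijOn_psi.injOn, ChekanovSchlenk.bijOn_psi.image_eq,
    fun p hp v w => ?_⟩
  simpa only [ChekanovSchlenk.symplecticForm_apply] using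
    ChekanovSchlenk.symplecticForm_fderiv_psi hp v w
end

section
/- Let u : (D,∂D) → (ℂⁿ, T(a₁,…,aₙ)) be a non-constant holomorphic map from the closed unit disc with boundary on the product torus T(a₁,…,aₙ) = T(a₁)×…×T(aₙ). Then the symplectic area ∫_D u*ωₙ is at least min(a₁,…,aₙ). -/
/-!
Some component `f = uⱼ` is non-constant. By the open mapping and maximum modulus principles it
maps the unit disc onto the disc of radius `√(aⱼ / π)`, so the area formula gives
`aⱼ ≤ ∫ |f'|²`. The integral is finite (so the Bochner integral is not its junk value `0`)
because `f`, having constant modulus on the circle, is a constant times a finite Blaschke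
product: its zeros lie in a compact subdisc, and dividing out one zero at a time by a Blaschke
factor keeps the boundary modulus while raising `|f|` at a fixed point by a fixed factor, so
after finitely many steps one reaches a zero-free function of constant boundary modulus, which
is constant. Hence `f` extends holomorphically across the circle.
-/

open Complex Metric Set Filter Topology MeasureTheory ComplexConjugate

section BlaschkeFactor

variable {α z : ℂ}

theorem norm_one_sub_conj_mul_sq_sub_norm_sub_sq (α z : ℂ) :
    ‖1 - conj α * z‖ ^ 2 - ‖z - α‖ ^ 2 = (1 - ‖α‖ ^ 2) * (1 - ‖z‖ ^ 2) := by
  simp only [← normSq_eq_norm_sq, normSq_apply, sub_re, sub_im, mul_re, mul_im, one_re, one_im,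
    conj_re, conj_im]
  ring

theorem norm_sub_le_norm_one_sub_conj_mul (hα : ‖α‖ ≤ 1) (hz : ‖z‖ ≤ 1) :
    ‖z - α‖ ≤ ‖1 - conj α * z‖ := by
  have := norm_one_sub_conj_mul_sq_sub_norm_sub_sq α z
  have hα' : ‖α‖ ^ 2 ≤ 1 := pow_le_one₀ (norm_nonneg _) hα
  have hz' : ‖z‖ ^ 2 ≤ 1 := pow_le_one₀ (norm_nonneg _) hz
  exact pow_le_pow_iff_left₀ (norm_nonneg _) (norm_nonneg _) two_ne_zero |>.1
    (by nlinarith [mul_nonneg (sub_nonneg.2 hα') (sub_nonneg.2 hz')])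

theorem norm_one_sub_conj_mul_eq_of_norm_eq_one (hz : ‖z‖ = 1) :
    ‖1 - conj α * z‖ = ‖z - α‖ := by
  have := norm_one_sub_conj_mul_sq_sub_norm_sub_sq α z
  rw [hz, one_pow, sub_self, mul_zero, sub_eq_zero] at this
  exact (pow_left_inj₀ (norm_nonneg _) (norm_nonneg _) two_ne_zero).1 this

theorem norm_sub_sq_le_mul_norm_one_sub_conj_mul_sq {ρ : ℝ} (hρ : ρ ≤ 1) (hα : ‖α‖ ≤ ρ)
    (hz : ‖z‖ ≤ ρ) :
    ‖z - α‖ ^ 2 ≤ (1 - (1 - ρ ^ 2) ^ 2 / 4) * ‖1 - conj α * z‖ ^ 2 := by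
  have hρ0 : 0 ≤ ρ := (norm_nonneg _).trans hα
  have hid := norm_one_sub_conj_mul_sq_sub_norm_sub_sq α z
  have hα' : ‖α‖ ^ 2 ≤ ρ ^ 2 := pow_le_pow_left₀ (norm_nonneg _) hα 2
  have hz' : ‖z‖ ^ 2 ≤ ρ ^ 2 := pow_le_pow_left₀ (norm_nonneg _) hz 2
  have hρ' : ρ ^ 2 ≤ 1 := pow_le_one₀ hρ0 hρ
  have hgap : (1 - ρ ^ 2) ^ 2 ≤ (1 - ‖α‖ ^ 2) * (1 - ‖z‖ ^ 2) := by
    rw [sq]; gcongr; linarith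
  have hle2 : ‖1 - conj α * z‖ ≤ 2 := by
    calc ‖1 - conj α * z‖ ≤ ‖(1 : ℂ)‖ + ‖conj α * z‖ := norm_sub_le _ _
      _ ≤ 2 := by
        rw [norm_one, norm_mul, RCLike.norm_conj]
        nlinarith [norm_nonneg α, norm_nonneg z]
  have hle4 : ‖1 - conj α * z‖ ^ 2 ≤ 4 := by nlinarith [norm_nonneg (1 - conj α * z)]
  nlinarith [sq_nonneg (1 - ρ ^ 2)]

end BlaschkeFactor

section UnitDisc

variable {f : ℂ → ℂ} {r : ℝ}

theorem norm_le_of_norm_eq_on_circle (hf : DiffContOnCl ℂ f (ball 0 1))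
    (hb : ∀ z : ℂ, ‖z‖ = 1 → ‖f z‖ = r) {z : ℂ} (hz : z ∈ closedBall (0:ℂ) 1) : ‖f z‖ ≤ r := by
  refine norm_le_of_forall_mem_frontier_norm_le isBounded_ball hf (fun w hw => ?_)
    (by rwa [closure_ball 0 one_ne_zero])
  rw [frontier_ball 0 one_ne_zero, mem_sphere_zero_iff_norm] at hw
  exact (hb w hw).le

theorem eqOn_const_of_norm_eq_on_circle (hf : DiffContOnCl ℂ f (ball 0 1))
    (hb : ∀ z : ℂ, ‖z‖ = 1 → ‖f z‖ = r) (hnz : ∀ z ∈ closedBall (0:ℂ) 1, f z ≠ 0) :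
    EqOn f (Function.const ℂ (f 0)) (ball 0 1) := by
  have hf0 : 0 < ‖f 0‖ := norm_pos_iff.2 (hnz 0 (mem_closedBall_self zero_le_one))
  have hr : 0 < r := by
    rw [← hb 1 norm_one]
    exact norm_pos_iff.2 (hnz 1 (mem_closedBall_zero_iff.2 norm_one.le))
  have hinv : DiffContOnCl ℂ f⁻¹ (ball 0 1) :=
    hf.inv fun z hz => hnz z (by rwa [closure_ball 0 one_ne_zero] at hz)
  -- the minimum modulus principle, as the maximum modulus principle for `1 / f`
  have hr_le : r ≤ ‖f 0‖ := by
    have := norm_le_of_norm_eq_on_circle (r := r⁻¹) hinv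
      (fun z hz => by rw [Pi.inv_apply, norm_inv, hb z hz]) (mem_closedBall_self zero_le_one)
    rwa [Pi.inv_apply, norm_inv, inv_le_inv₀ hf0 hr] at this
  refine eqOn_of_isPreconnected_of_isMaxOn_norm (convex_ball 0 1).isPreconnected isOpen_ball
    hf.differentiableOn (mem_ball_self one_pos) fun z hz => ?_
  exact (norm_le_of_norm_eq_on_circle hf hb (ball_subset_closedBall hz)).trans hr_le

theorem exists_zero_free_annulus (hf : ContinuousOn f (closedBall 0 1))
    (hnz : ∀ z : ℂ, ‖z‖ = 1 → f z ≠ 0) :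
    ∃ ρ, 0 ≤ ρ ∧ ρ < 1 ∧ ∀ z ∈ closedBall (0:ℂ) 1, ρ ≤ ‖z‖ → f z ≠ 0 := by
  have hK : IsCompact (insert 0 (closedBall (0:ℂ) 1 ∩ f ⁻¹' {0})) :=
    ((isCompact_closedBall 0 1).of_isClosed_subset
      (hf.preimage_isClosed_of_isClosed isClosed_closedBall isClosed_singleton)
      inter_subset_left).insert 0
  obtain ⟨w, hwK, hw⟩ := hK.exists_isMaxOn (insert_nonempty _ _) continuous_norm.continuousOn
  have hw1 : ‖w‖ < 1 := by
    rcases hwK with rfl | ⟨hw1, hw0⟩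
    · simp
    · exact (mem_closedBall_zero_iff.1 hw1).lt_of_ne fun h => hnz w h hw0
  refine ⟨(‖w‖ + 1) / 2, by positivity, by linarith, fun z hz hρz hz0 => ?_⟩
  have : ‖z‖ ≤ ‖w‖ := hw (mem_insert_of_mem _ ⟨hz, hz0⟩)
  linarith

end UnitDisc

/-- The quotient of `f` by the Blaschke factor `(z - α) / (1 - conj α * z)`, when `f α = 0`. -/
noncomputable def divBlaschke (f : ℂ → ℂ) (α z : ℂ) : ℂ := (1 - conj α * z) * dslope f α z

section DivBlaschke

variable {f : ℂ → ℂ} {α z : ℂ}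

theorem sub_mul_divBlaschke (hfα : f α = 0) (z : ℂ) :
    (z - α) * divBlaschke f α z = (1 - conj α * z) * f z := by
  rw [divBlaschke, mul_left_comm, ← smul_eq_mul (z - α), sub_smul_dslope, hfα, sub_zero]

theorem norm_mul_norm_divBlaschke (hfα : f α = 0) (z : ℂ) :
    ‖z - α‖ * ‖divBlaschke f α z‖ = ‖1 - conj α * z‖ * ‖f z‖ := by
  rw [← norm_mul, ← norm_mul, sub_mul_divBlaschke hfα]

theorem DiffContOnCl.divBlaschke (hf : DiffContOnCl ℂ f (ball 0 1)) (hα : α ∈ ball (0:ℂ) 1) :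
    DiffContOnCl ℂ (divBlaschke f α) (ball 0 1) := by
  have hlin : Differentiable ℂ fun z : ℂ => 1 - conj α * z := by fun_prop
  have hα_nhds : closedBall (0:ℂ) 1 ∈ 𝓝 α :=
    mem_of_superset (isOpen_ball.mem_nhds hα) ball_subset_closedBall
  exact .mk_ball
    (hlin.differentiableOn.mul
      ((differentiableOn_dslope (isOpen_ball.mem_nhds hα)).2 hf.differentiableOn))
    (hlin.continuous.continuousOn.mul ((continuousOn_dslope hα_nhds).2
      ⟨hf.continuousOn_ball, hf.differentiableOn.differentiableAt (isOpen_ball.mem_nhds hα)⟩))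

theorem norm_divBlaschke_of_norm_eq_one (hfα : f α = 0) (hα : ‖α‖ < 1) (hz : ‖z‖ = 1) :
    ‖divBlaschke f α z‖ = ‖f z‖ := by
  have hzα : ‖z - α‖ ≠ 0 := by
    rw [norm_ne_zero_iff, sub_ne_zero]
    rintro rfl
    exact hα.ne hz
  have := norm_mul_norm_divBlaschke hfα z
  rwa [norm_one_sub_conj_mul_eq_of_norm_eq_one hz, mul_right_inj' hzα] at this

theorem norm_le_norm_divBlaschke (hfα : f α = 0) (hα : ‖α‖ ≤ 1) (hz : ‖z‖ ≤ 1) :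
    ‖f z‖ ≤ ‖divBlaschke f α z‖ := by
  rcases eq_or_ne z α with rfl | hzα
  · simp [hfα]
  refine le_of_mul_le_mul_left ?_ (norm_pos_iff.2 (sub_ne_zero.2 hzα))
  rw [norm_mul_norm_divBlaschke hfα]
  exact mul_le_mul_of_nonneg_right (norm_sub_le_norm_one_sub_conj_mul hα hz) (norm_nonneg _)

theorem norm_sq_le_mul_norm_divBlaschke_sq (hfα : f α = 0) {ρ : ℝ} (hρ : ρ < 1)
    (hα : ‖α‖ ≤ ρ) (hz : ‖z‖ ≤ ρ) :
    ‖f z‖ ^ 2 ≤ (1 - (1 - ρ ^ 2) ^ 2 / 4) * ‖divBlaschke f α z‖ ^ 2 := by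
  have hρ0 : 0 ≤ ρ := (norm_nonneg _).trans hα
  have hden : 0 < ‖1 - conj α * z‖ ^ 2 := by
    refine pow_pos (norm_pos_iff.2 fun h => ?_) 2
    have : ‖conj α * z‖ < 1 := by
      rw [norm_mul, RCLike.norm_conj]
      nlinarith [norm_nonneg α, norm_nonneg z]
    rw [← sub_eq_zero.1 h, norm_one] at this
    exact this.false
  refine le_of_mul_le_mul_left ?_ hden
  calc ‖1 - conj α * z‖ ^ 2 * ‖f z‖ ^ 2 = ‖z - α‖ ^ 2 * ‖divBlaschke f α z‖ ^ 2 := by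
        rw [← mul_pow, ← mul_pow, norm_mul_norm_divBlaschke hfα]
    _ ≤ (1 - (1 - ρ ^ 2) ^ 2 / 4) * ‖1 - conj α * z‖ ^ 2 * ‖divBlaschke f α z‖ ^ 2 := by
        gcongr
        exact norm_sub_sq_le_mul_norm_one_sub_conj_mul_sq hρ.le hα hz
    _ = _ := by ring

end DivBlaschke

def ExtendsAcrossUnitCircle (f : ℂ → ℂ) : Prop :=
  ∃ h : ℂ → ℂ, ∃ U ∈ 𝓝ˢ (closedBall (0:ℂ) 1), DifferentiableOn ℂ h U ∧ EqOn f h (ball 0 1)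

section Extension

variable {f : ℂ → ℂ} {r : ℝ}

theorem ExtendsAcrossUnitCircle.of_divBlaschke {α : ℂ} (hfα : f α = 0) (hα : ‖α‖ < 1)
    (hg : ExtendsAcrossUnitCircle (divBlaschke f α)) : ExtendsAcrossUnitCircle f := by
  obtain ⟨h, U, hU, hhU, hgh⟩ := hg
  have hden : ∀ z ∈ closedBall (0:ℂ) 1, 1 - conj α * z ≠ 0 := by
    intro z hz h0
    have : ‖conj α * z‖ < 1 := by
      rw [norm_mul, RCLike.norm_conj]
      nlinarith [norm_nonneg α, mem_closedBall_zero_iff.1 hz, norm_nonneg z]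
    rw [← sub_eq_zero.1 h0, norm_one] at this
    exact this.false
  refine ⟨fun z => (z - α) / (1 - conj α * z) * h z, U ∩ {z | 1 - conj α * z ≠ 0},
    inter_mem hU ((isOpen_ne_fun (by fun_prop) (by fun_prop)).mem_nhdsSet.2 hden), ?_, ?_⟩
  · exact ((differentiableOn_id.sub_const α).div (by fun_prop) fun z hz => hz.2).mul
      (hhU.mono inter_subset_left)
  · intro z hz
    dsimp only
    rw [← hgh hz, div_mul_eq_mul_div, eq_div_iff (hden z (ball_subset_closedBall hz)),
      sub_mul_divBlaschke hfα, mul_comm]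

theorem ExtendsAcrossUnitCircle.integrableOn_norm_deriv_sq (hf : ExtendsAcrossUnitCircle f) :
    IntegrableOn (fun z => ‖deriv f z‖ ^ 2) (ball 0 1) := by
  obtain ⟨h, U, hU, hhU, hfh⟩ := hf
  have hcont : ContinuousOn (fun z => ‖deriv h z‖ ^ 2) (closedBall 0 1) := fun z hz =>
    ((hhU.analyticAt (mem_nhdsSet_iff_forall.1 hU z hz)).deriv.continuousAt.norm.pow 2
      ).continuousWithinAt
  refine ((hcont.integrableOn_compact (isCompact_closedBall 0 1)).mono_set
    ball_subset_closedBall).congr_fun (fun z hz => ?_) measurableSet_ball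
  rw [(eventuallyEq_of_mem (isOpen_ball.mem_nhds hz) hfh).deriv_eq]

-- `ρ` is the inner radius of a zero-free annulus; the quantity `‖f ρ‖ ^ 2` grows by a factor
-- `(1 - (1 - ρ ^ 2) ^ 2 / 4)⁻¹ > 1` with each zero divided out, but stays at most `r ^ 2`.
theorem extendsAcrossUnitCircle_of_sq_mul_pow_lt {ρ : ℝ} (hρ0 : 0 ≤ ρ) (hρ1 : ρ < 1) (m : ℕ)
    (hf : DiffContOnCl ℂ f (ball 0 1)) (hb : ∀ z : ℂ, ‖z‖ = 1 → ‖f z‖ = r)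
    (hann : ∀ z ∈ closedBall (0:ℂ) 1, ρ ≤ ‖z‖ → f z ≠ 0)
    (hlt : r ^ 2 * (1 - (1 - ρ ^ 2) ^ 2 / 4) ^ m < ‖f ρ‖ ^ 2) :
    ExtendsAcrossUnitCircle f := by
  have hρ_norm : ‖(ρ : ℂ)‖ = ρ := by rw [norm_real, Real.norm_of_nonneg hρ0]
  have hρ_mem : (ρ : ℂ) ∈ closedBall (0:ℂ) 1 := by
    rw [mem_closedBall_zero_iff, hρ_norm]; exact hρ1.le
  have hq : 0 < 1 - (1 - ρ ^ 2) ^ 2 / 4 := by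
    have : (1 - ρ ^ 2) ^ 2 ≤ 1 := pow_le_one₀ (by nlinarith) (by nlinarith)
    linarith
  induction m generalizing f with
  | zero =>
    have := norm_le_of_norm_eq_on_circle hf hb hρ_mem
    nlinarith [norm_nonneg (f ρ)]
  | succ m ih =>
    by_cases hzero : ∃ α ∈ ball (0:ℂ) 1, f α = 0
    · obtain ⟨α, hα, hfα⟩ := hzero
      have hα1 := mem_ball_zero_iff.1 hα
      have hαρ : ‖α‖ ≤ ρ := (not_le.1 fun h => hann α (ball_subset_closedBall hα) h hfα).le
      refine .of_divBlaschke hfα hα1 (ih (hf.divBlaschke hα)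
        (fun z hz => (norm_divBlaschke_of_norm_eq_one hfα hα1 hz).trans (hb z hz))
        (fun z hz hρz h0 => hann z hz hρz (norm_eq_zero.1 (le_antisymm ?_ (norm_nonneg _))))
        ?_)
      · simpa [h0] using norm_le_norm_divBlaschke hfα hα1.le (mem_closedBall_zero_iff.1 hz)
      · have := norm_sq_le_mul_norm_divBlaschke_sq hfα hρ1 hαρ hρ_norm.le
        rw [pow_succ _ m, ← mul_assoc] at hlt
        exact lt_of_mul_lt_mul_right (hlt.trans_le (this.trans_eq (mul_comm _ _))) hq.le
    · push Not at hzero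
      refine ⟨Function.const ℂ (f 0), univ, univ_mem, differentiableOn_const _,
        eqOn_const_of_norm_eq_on_circle hf hb fun z hz => ?_⟩
      rcases lt_or_ge ‖z‖ ρ with hzρ | hρz
      · exact hzero z (mem_ball_zero_iff.2 (hzρ.trans hρ1))
      · exact hann z hz hρz

theorem DiffContOnCl.extendsAcrossUnitCircle (hr : 0 < r) (hf : DiffContOnCl ℂ f (ball 0 1))
    (hb : ∀ z : ℂ, ‖z‖ = 1 → ‖f z‖ = r) : ExtendsAcrossUnitCircle f := by
  obtain ⟨ρ, hρ0, hρ1, hann⟩ := exists_zero_free_annulus hf.continuousOn_ball fun z hz h0 => by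
    simpa [h0, hr.ne] using hb z hz
  have hρ_mem : (ρ : ℂ) ∈ closedBall (0:ℂ) 1 := by
    rw [mem_closedBall_zero_iff, norm_real, Real.norm_of_nonneg hρ0]; exact hρ1.le
  have hfρ : 0 < ‖f ρ‖ ^ 2 / r ^ 2 := by
    have := hann ρ hρ_mem (by rw [norm_real, Real.norm_of_nonneg hρ0])
    positivity
  obtain ⟨m, hm⟩ := exists_pow_lt_of_lt_one hfρ (by
    have : 0 < (1 - ρ ^ 2) ^ 2 := pow_pos (by nlinarith) 2
    linarith : 1 - (1 - ρ ^ 2) ^ 2 / 4 < 1)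
  exact extendsAcrossUnitCircle_of_sq_mul_pow_lt hρ0 hρ1 m hf hb hann
    (by rwa [lt_div_iff₀ (by positivity), mul_comm] at hm)

end Extension

theorem volume_image_le_lintegral_norm_deriv_sq {f : ℂ → ℂ} {s : Set ℂ} (hs : IsOpen s)
    (hf : DifferentiableOn ℂ f s) :
    volume (f '' s) ≤ ∫⁻ z in s, ENNReal.ofReal (‖deriv f z‖ ^ 2) := by
  have hderiv : ∀ z ∈ s, HasFDerivWithinAt f
      ((ContinuousLinearMap.toSpanSingleton ℂ (deriv f z)).restrictScalars ℝ) s z := fun z hz =>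
    ((hf.differentiableAt (hs.mem_nhds hz)).hasDerivAt.hasFDerivAt.restrictScalars ℝ
      ).hasFDerivWithinAt
  refine (addHaar_image_le_lintegral_abs_det_fderiv volume hs.measurableSet hderiv).trans_eq ?_
  simp [ContinuousLinearMap.det, LinearMap.det_restrictScalars, Algebra.norm_complex_eq,
    Complex.normSq_eq_norm_sq]

section Area

variable {f : ℂ → ℂ} {r : ℝ}

theorem isOpen_image_ball_of_exists_ne (hf : DiffContOnCl ℂ f (ball 0 1))
    (hnc : ∃ z ∈ closedBall (0:ℂ) 1, ∃ w ∈ closedBall (0:ℂ) 1, f z ≠ f w) :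
    IsOpen (f '' ball 0 1) := by
  rcases (hf.differentiableOn.analyticOnNhd isOpen_ball).is_constant_or_isOpen
    (convex_ball 0 1).isPreconnected with ⟨c, hc⟩ | hopen
  · obtain ⟨z, hz, w, hw, hne⟩ := hnc
    have hcl : EqOn f (Function.const ℂ c) (closedBall 0 1) :=
      EqOn.of_subset_closure hc hf.continuousOn_ball continuousOn_const
        ball_subset_closedBall (closure_ball 0 one_ne_zero).ge
    exact absurd ((hcl hz).trans (hcl hw).symm) hne
  · exact hopen _ subset_rfl isOpen_ball

theorem image_ball_eq_ball_of_norm_eq_on_circle (hr : 0 < r) (hf : DiffContOnCl ℂ f (ball 0 1))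
    (hb : ∀ z : ℂ, ‖z‖ = 1 → ‖f z‖ = r) (hopen : IsOpen (f '' ball 0 1)) :
    f '' ball 0 1 = ball 0 r := by
  have hsub : f '' ball 0 1 ⊆ ball 0 r := by
    rw [← interior_closedBall 0 hr.ne']
    refine interior_maximal (image_subset_iff.2 fun z hz => ?_) hopen
    exact mem_closedBall_zero_iff.2 (norm_le_of_norm_eq_on_circle hf hb (ball_subset_closedBall hz))
  refine hsub.antisymm ((convex_ball 0 r).isPreconnected.subset_of_closure_inter_subset hopen
    ?_ ?_)
  · have h0 : f 0 ∈ f '' ball 0 1 := mem_image_of_mem f (mem_ball_self one_pos)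
    exact ⟨f 0, hsub h0, h0⟩
  · rintro w ⟨hw, hwr⟩
    have hK := (isCompact_closedBall (0:ℂ) 1).image_of_continuousOn hf.continuousOn_ball
    obtain ⟨z, hz, rfl⟩ := closure_minimal (image_mono ball_subset_closedBall) hK.isClosed hw
    rcases (mem_closedBall_zero_iff.1 hz).lt_or_eq with hz1 | hz1
    · exact mem_image_of_mem f (mem_ball_zero_iff.2 hz1)
    · exact absurd (hb z hz1) (mem_ball_zero_iff.1 hwr).ne

theorem pi_mul_sq_le_integral_norm_deriv_sq (hr : 0 < r) (hf : DiffContOnCl ℂ f (ball 0 1))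
    (hb : ∀ z : ℂ, ‖z‖ = 1 → ‖f z‖ = r)
    (hnc : ∃ z ∈ closedBall (0:ℂ) 1, ∃ w ∈ closedBall (0:ℂ) 1, f z ≠ f w) :
    Real.pi * r ^ 2 ≤ ∫ z in ball (0:ℂ) 1, ‖deriv f z‖ ^ 2 := by
  have hvol : ENNReal.ofReal (Real.pi * r ^ 2) = volume (ball (0:ℂ) r) := by
    rw [Complex.volume_ball, ← ENNReal.ofReal_pow hr.le, ← ENNReal.ofReal_coe_nnreal,
      NNReal.coe_real_pi, ← ENNReal.ofReal_mul (sq_nonneg r), mul_comm]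
  refine (ENNReal.ofReal_le_ofReal_iff (setIntegral_nonneg measurableSet_ball
    fun z _ => sq_nonneg _)).1 ?_
  calc ENNReal.ofReal (Real.pi * r ^ 2) = volume (f '' ball 0 1) := by
        rw [hvol, image_ball_eq_ball_of_norm_eq_on_circle hr hf hb
          (isOpen_image_ball_of_exists_ne hf hnc)]
    _ ≤ ∫⁻ z in ball 0 1, ENNReal.ofReal (‖deriv f z‖ ^ 2) :=
        volume_image_le_lintegral_norm_deriv_sq isOpen_ball hf.differentiableOn
    _ = ENNReal.ofReal (∫ z in ball (0:ℂ) 1, ‖deriv f z‖ ^ 2) :=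
        (ofReal_integral_eq_lintegral_ofReal
          (hf.extendsAcrossUnitCircle hr hb).integrableOn_norm_deriv_sq
          (Eventually.of_forall fun _ => sq_nonneg _)).symm

end Area

/-- **Holomorphic discs on a product torus have area at least `min aⱼ`.** Let
`u : (D,∂D) → (ℂⁿ, T(a₁,…,aₙ))` be a non-constant holomorphic map of the closed unit
disc with boundary on the product torus `T(a₁,…,aₙ)` (where `T(a) = {π|z|² = a}`).
Its symplectic area `∫_D u*ωₙ = ∫_D Σⱼ |uⱼ'|²` is at least `min(a₁,…,aₙ)`. -/
theorem holomorphic_disc_area_ge_min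
    (n : ℕ) (a : Fin (n + 1) → ℝ) (ha : ∀ j, 0 < a j)
    (u : ℂ → Fin (n + 1) → ℂ)
    (hu_cont : ContinuousOn u (closedBall 0 1))
    (hu_holo : DifferentiableOn ℂ u (ball 0 1))
    (hu_bdry : ∀ z : ℂ, ‖z‖ = 1 → ∀ j, Real.pi * ‖u z j‖ ^ 2 = a j)
    (hu_nonconst : ∃ z ∈ closedBall (0:ℂ) 1, ∃ w ∈ closedBall (0:ℂ) 1, u z ≠ u w) :
    Finset.univ.inf' Finset.univ_nonempty a
      ≤ ∫ z in ball (0:ℂ) 1, ∑ j, ‖deriv (fun w => u w j) z‖ ^ 2 := by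
  obtain ⟨z, hz, w, hw, hne⟩ := hu_nonconst
  obtain ⟨j, hj⟩ := Function.ne_iff.1 hne
  set r : Fin (n + 1) → ℝ := fun k => √(a k / Real.pi)
  have hr : ∀ k, 0 < r k := fun k => Real.sqrt_pos.2 (div_pos (ha k) Real.pi_pos)
  have hpi_r : ∀ k, Real.pi * r k ^ 2 = a k := fun k => by
    rw [Real.sq_sqrt (div_pos (ha k) Real.pi_pos).le, mul_div_cancel₀ _ Real.pi_pos.ne']
  have hb : ∀ k, ∀ z : ℂ, ‖z‖ = 1 → ‖u z k‖ = r k := fun k z hz => by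
    rw [← sq_eq_sq₀ (norm_nonneg _) (hr k).le, ← mul_right_inj' Real.pi_pos.ne', hpi_r,
      hu_bdry z hz]
  have hdc : ∀ k, DiffContOnCl ℂ (fun w => u w k) (ball 0 1) := fun k =>
    .mk_ball (differentiableOn_pi.1 hu_holo k) (continuousOn_pi.1 hu_cont k)
  calc Finset.univ.inf' Finset.univ_nonempty a ≤ a j := Finset.inf'_le a (Finset.mem_univ j)
    _ ≤ ∫ z in ball (0:ℂ) 1, ‖deriv (fun w => u w j) z‖ ^ 2 := by
        rw [← hpi_r]
        exact pi_mul_sq_le_integral_norm_deriv_sq (hr j) (hdc j) (hb j) ⟨z, hz, w, hw, hj⟩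
    _ ≤ ∫ z in ball (0:ℂ) 1, ∑ k, ‖deriv (fun w => u w k) z‖ ^ 2 :=
        integral_mono_of_nonneg (Eventually.of_forall fun _ => sq_nonneg _)
          (integrable_finsetSum _ fun k _ =>
            ((hdc k).extendsAcrossUnitCircle (hr k) (hb k)).integrableOn_norm_deriv_sq)
          (Eventually.of_forall fun z => Finset.single_le_sum
            (f := fun k => ‖deriv (fun w => u w k) z‖ ^ 2) (fun _ _ => sq_nonneg _)
            (Finset.mem_univ j))
end
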